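/- arXiv:1606.00308 — 4 statements merged into one kernel-verified Lean document; each statement's English description precedes it below -/
import Mathlib

section
/- For a Banach space X over the reals, the following are equivalent: (1) X is subprojective; (2) for every Banach space Z, every improjective bounded operator T : Z → X is strictly singular; (3) there exists no Banach space Z and improjective injection J : Z → X. -/
open Filter Topology Metric

noncomputable section

universe u

/-- The Banach space `c₀` of real sequences converging to `0`, with the sup norm,
realized as the zero-at-infinity continuous functions on `ℕ`. -/
abbrev SeqC0 : Type := ZeroAtInftyContinuousMap ℕ ℝ

/-- The Banach space `ℓ₁` of absolutely summable real sequences. -/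
abbrev SeqL1 : Type := lp (fun _ : ℕ => ℝ) 1

/-- A Banach space is subprojective if every infinite-dimensional closed subspace
contains an infinite-dimensional closed subspace complemented in the whole space. -/
def Subprojective (X : Type*) [NormedAddCommGroup X] [NormedSpace ℝ X] : Prop :=
  ∀ M : Submodule ℝ X, IsClosed (M : Set X) → ¬FiniteDimensional ℝ M →
    ∃ N : Submodule ℝ X, N ≤ M ∧ IsClosed (N : Set X) ∧ ¬FiniteDimensional ℝ N ∧
      N.ClosedComplemented

/-- A Banach space is superprojective if every closed subspace of infinite codimension
is contained in a closed subspace of infinite codimension complemented in the whole space. -/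
def Superprojective (X : Type*) [NormedAddCommGroup X] [NormedSpace ℝ X] : Prop :=
  ∀ M : Submodule ℝ X, IsClosed (M : Set X) → ¬FiniteDimensional ℝ (X ⧸ M) →
    ∃ N : Submodule ℝ X, M ≤ N ∧ IsClosed (N : Set X) ∧ ¬FiniteDimensional ℝ (X ⧸ N) ∧
      N.ClosedComplemented

section Operators

variable {X Y : Type*} [NormedAddCommGroup X] [NormedSpace ℝ X]
  [NormedAddCommGroup Y] [NormedSpace ℝ Y]

/-- The restriction of `T` to the subspace `M` is an isomorphism onto its image,
i.e. `T` is bounded below on `M`. -/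
def IsIsoOn (T : X →L[ℝ] Y) (M : Submodule ℝ X) : Prop :=
  ∃ c > 0, ∀ x ∈ M, c * ‖x‖ ≤ ‖T x‖

/-- An operator is improjective if there is no infinite-dimensional closed subspace `M`
such that the restriction of `T` to `M` is an isomorphism onto `T(M)` and `T(M)` is
complemented in the target space. -/
def Improjective (T : X →L[ℝ] Y) : Prop :=
  ¬ ∃ M : Submodule ℝ X, IsClosed (M : Set X) ∧ ¬FiniteDimensional ℝ M ∧
      IsIsoOn T M ∧ (M.map (T : X →ₗ[ℝ] Y)).ClosedComplemented

/-- An operator is strictly singular if there is no infinite-dimensional closed subspace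
on which it is an isomorphism onto its image. -/
def StrictlySingular (T : X →L[ℝ] Y) : Prop :=
  ¬ ∃ M : Submodule ℝ X, IsClosed (M : Set X) ∧ ¬FiniteDimensional ℝ M ∧ IsIsoOn T M

/-- An operator is strictly cosingular if there is no closed infinite-codimensional
subspace `N` of the target such that the composition with the quotient map onto `Y/N`
is surjective. -/
def StrictlyCosingular (T : X →L[ℝ] Y) : Prop :=
  ¬ ∃ N : Submodule ℝ Y, IsClosed (N : Set Y) ∧ ¬FiniteDimensional ℝ (Y ⧸ N) ∧
      Function.Surjective (fun x : X => (Submodule.Quotient.mk (T x) : Y ⧸ N))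

/-- An injection: an isomorphic embedding with infinite-dimensional range. -/
def IsInjection (T : X →L[ℝ] Y) : Prop :=
  (∃ c > 0, ∀ x : X, c * ‖x‖ ≤ ‖T x‖) ∧ ¬FiniteDimensional ℝ (LinearMap.range (T : X →ₗ[ℝ] Y))

/-- A surjection: a surjective operator with infinite-dimensional range. -/
def IsSurjection (T : X →L[ℝ] Y) : Prop :=
  Function.Surjective T ∧ ¬FiniteDimensional ℝ Y

/-- A sequence converges weakly to `x₀`. -/
def WeakTendsto (x : ℕ → X) (x₀ : X) : Prop :=
  ∀ f : X →L[ℝ] ℝ, Tendsto (fun n => f (x n)) atTop (𝓝 (f x₀))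

/-- A set is relatively weakly compact if its closure in the weak topology is compact. -/
def RelWeaklyCompact (s : Set X) : Prop :=
  IsCompact (closure ((toWeakSpace ℝ X) '' s))

/-- A weakly compact operator: the image of the closed unit ball is relatively
weakly compact. -/
def WeaklyCompactOp (T : X →L[ℝ] Y) : Prop :=
  RelWeaklyCompact (T '' Metric.closedBall 0 1)

/-- A compact operator: the image of the closed unit ball is relatively norm compact. -/
def CompactOp (T : X →L[ℝ] Y) : Prop :=
  IsCompact (closure (T '' Metric.closedBall 0 1))

/-- An unconditionally converging operator: there is no closed subspace isomorphic to `c₀`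
on which the operator is an isomorphism onto its image. -/
def UnconditionallyConverging (T : X →L[ℝ] Y) : Prop :=
  ¬ ∃ M : Submodule ℝ X, IsClosed (M : Set X) ∧ Nonempty (M ≃L[ℝ] SeqC0) ∧ IsIsoOn T M

end Operators

/-- The Dunford-Pettis property: every weakly compact operator into a Banach space takes
weakly convergent sequences to norm convergent sequences. -/
def DunfordPettis (X : Type u) [NormedAddCommGroup X] [NormedSpace ℝ X] : Prop :=
  ∀ (Y : Type u) [NormedAddCommGroup Y] [NormedSpace ℝ Y] [CompleteSpace Y],
    ∀ T : X →L[ℝ] Y, WeaklyCompactOp T →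
      ∀ (x : ℕ → X) (x₀ : X), WeakTendsto x x₀ →
        Tendsto (fun n => T (x n)) atTop (𝓝 (T x₀))

/-- A Banach space is reflexive if the canonical embedding into its double dual
is surjective. -/
def ReflexiveSpace (X : Type*) [SeminormedAddCommGroup X] [NormedSpace ℝ X] : Prop :=
  Function.Surjective (NormedSpace.inclusionInDoubleDual ℝ X)

/-- The Schur property: weakly convergent sequences are norm convergent. -/
def SchurProperty (X : Type*) [NormedAddCommGroup X] [NormedSpace ℝ X] : Prop :=
  ∀ (x : ℕ → X) (x₀ : X), WeakTendsto x x₀ → Tendsto x atTop (𝓝 x₀)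

/-- `X` is hereditarily `Z`: every infinite-dimensional closed subspace of `X` contains a
closed subspace isomorphic to `Z`. -/
def Hereditarily (Z : Type*) [NormedAddCommGroup Z] [NormedSpace ℝ Z]
    (X : Type*) [NormedAddCommGroup X] [NormedSpace ℝ X] : Prop :=
  ∀ M : Submodule ℝ X, IsClosed (M : Set X) → ¬FiniteDimensional ℝ M →
    ∃ N : Submodule ℝ X, N ≤ M ∧ IsClosed (N : Set X) ∧ Nonempty (N ≃L[ℝ] Z)

/-- Property (V): every unconditionally converging operator from `X` into a Banach space
is weakly compact. -/
def PropertyV (X : Type u) [NormedAddCommGroup X] [NormedSpace ℝ X] : Prop :=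
  ∀ (Y : Type u) [NormedAddCommGroup Y] [NormedSpace ℝ Y] [CompleteSpace Y],
    ∀ T : X →L[ℝ] Y, UnconditionallyConverging T → WeaklyCompactOp T

/-- The class `Sp(U⁻¹∘K)`: every unconditionally converging operator from `X` into a
Banach space is compact. -/
def MemSpUK (X : Type u) [NormedAddCommGroup X] [NormedSpace ℝ X] : Prop :=
  ∀ (Y : Type u) [NormedAddCommGroup Y] [NormedSpace ℝ Y] [CompleteSpace Y],
    ∀ T : X →L[ℝ] Y, UnconditionallyConverging T → CompactOp T

/-- `X` is an `L_{p,λ}`-space: every finite-dimensional subspace is contained in a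
finite-dimensional subspace `E` whose Banach-Mazur distance to `ℓ_p^{dim E}`
(realized as `PiLp p (fun _ : Fin (dim E) => ℝ)`) is at most `λ`. -/
def IsLpLambdaSpace (p : ENNReal) [Fact (1 ≤ p)] (lam : ℝ)
    (X : Type*) [NormedAddCommGroup X] [NormedSpace ℝ X] : Prop :=
  ∀ F : Submodule ℝ X, FiniteDimensional ℝ F →
    ∃ E : Submodule ℝ X, F ≤ E ∧ FiniteDimensional ℝ E ∧
      ∃ T : E ≃L[ℝ] PiLp p (fun _ : Fin (Module.finrank ℝ E) => ℝ),
        ‖(T : E →L[ℝ] PiLp p (fun _ : Fin (Module.finrank ℝ E) => ℝ))‖ *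
          ‖(T.symm : PiLp p (fun _ : Fin (Module.finrank ℝ E) => ℝ) →L[ℝ] E)‖ ≤ lam

/-- `X` is an `L_p`-space if it is an `L_{p,λ}`-space for some `λ ≥ 1`. -/
def IsLpSpace (p : ENNReal) [Fact (1 ≤ p)]
    (X : Type*) [NormedAddCommGroup X] [NormedSpace ℝ X] : Prop :=
  ∃ lam : ℝ, 1 ≤ lam ∧ IsLpLambdaSpace p lam X

/-- `X` has an unconditional basis indexed by some (countable or uncountable) set:
every element has a unique representation as an unconditionally convergent sum
(`HasSum` is summability over the net of finite subsets, i.e. unconditional convergence). -/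
def HasUnconditionalBasis (X : Type u) [NormedAddCommGroup X] [NormedSpace ℝ X] : Prop :=
  ∃ (Γ : Type u) (e : Γ → X), ∀ x : X, ∃! a : Γ → ℝ, HasSum (fun γ => a γ • e γ) x

section MoreDefs

variable {X Y : Type*} [NormedAddCommGroup X] [NormedSpace ℝ X]
  [NormedAddCommGroup Y] [NormedSpace ℝ Y]

/-- A weakly Cauchy sequence: `(f (x n))` converges for every functional `f`. -/
def WeakCauchy (x : ℕ → X) : Prop :=
  ∀ f : X →L[ℝ] ℝ, ∃ r : ℝ, Tendsto (fun n => f (x n)) atTop (𝓝 r)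

/-- A weakly unconditionally Cauchy series: `∑ |f (y i)| < ∞` for every functional `f`. -/
def WUCSeries (y : ℕ → X) : Prop :=
  ∀ f : X →L[ℝ] ℝ, Summable (fun i => |f (y i)|)

/-- Property (u): for every weakly Cauchy sequence `(x n)` there is a weakly
unconditionally Cauchy series `∑ y i` such that `(x n - ∑_{i ≤ n} y i)` is weakly null. -/
def PropertyU (X : Type*) [NormedAddCommGroup X] [NormedSpace ℝ X] : Prop :=
  ∀ x : ℕ → X, WeakCauchy x →
    ∃ y : ℕ → X, WUCSeries y ∧
      WeakTendsto (fun n => x n - ∑ i ∈ Finset.range (n + 1), y i) 0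

/-- A sequence is equivalent to the unit vector basis of `c₀`. -/
def EquivC0Basis (x : ℕ → X) : Prop :=
  ∃ c > (0:ℝ), ∃ C > (0:ℝ), ∀ (s : Finset ℕ) (a : ℕ → ℝ),
    c * (s.sup fun i => ‖a i‖₊ : NNReal) ≤ ‖∑ i ∈ s, a i • x i‖ ∧
    ‖∑ i ∈ s, a i • x i‖ ≤ C * (s.sup fun i => ‖a i‖₊ : NNReal)

/-- Property (S): every weakly null, non norm null sequence has a subsequence equivalent
to the unit vector basis of `c₀`. -/
def PropertyS (X : Type*) [NormedAddCommGroup X] [NormedSpace ℝ X] : Prop :=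
  ∀ x : ℕ → X, WeakTendsto x 0 → ¬Tendsto x atTop (𝓝 0) →
    ∃ φ : ℕ → ℕ, StrictMono φ ∧ EquivC0Basis (fun n => x (φ n))

/-- A topological space is scattered if every nonempty subset has a point isolated in it. -/
def Scattered (K : Type*) [TopologicalSpace K] : Prop :=
  ∀ s : Set K, s.Nonempty → ∃ x ∈ s, ∃ U : Set K, IsOpen U ∧ U ∩ s = {x}

/-- The projective tensor norm on the algebraic tensor product: the infimum of
`∑ ‖xᵢ‖ ‖yᵢ‖` over all representations `u = ∑ xᵢ ⊗ yᵢ`. -/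
def projNorm (u : TensorProduct ℝ X Y) : ℝ :=
  sInf ((fun l : List (X × Y) => (l.map fun p => ‖p.1‖ * ‖p.2‖).sum) ''
    {l : List (X × Y) | (l.map fun p => p.1 ⊗ₜ[ℝ] p.2).sum = u})

end MoreDefs

section AuxProofs

variable {Z X : Type*} [NormedAddCommGroup Z] [NormedSpace ℝ Z]
  [NormedAddCommGroup X] [NormedSpace ℝ X]

lemma aux_injOn {T : Z →L[ℝ] X} {M : Submodule ℝ Z} (h : IsIsoOn T M) :
    ∀ x ∈ M, T x = 0 → x = 0 := by
  rintro x hx hTx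
  obtain ⟨c, hc, hb⟩ := h
  have h1 := hb x hx
  rw [hTx, norm_zero] at h1
  have : ‖x‖ ≤ 0 := by nlinarith [norm_nonneg x]
  exact norm_le_zero_iff.mp this

/-- The restriction of `T` to `M` as a continuous linear map on the subtype. -/
private def restr (T : Z →L[ℝ] X) (M : Submodule ℝ Z) : ↥M →L[ℝ] X :=
  T.comp M.subtypeL

lemma aux_restr_inj {T : Z →L[ℝ] X} {M : Submodule ℝ Z} (h : IsIsoOn T M) :
    Function.Injective (restr T M) := by
  intro x y hxy
  have : T ((x : Z) - (y : Z)) = 0 := by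
    simp only [map_sub]
    simpa [restr, sub_eq_zero] using hxy
  have hz := aux_injOn h _ (M.sub_mem x.2 y.2) this
  exact Subtype.ext (sub_eq_zero.mp hz)

lemma aux_range_restr (T : Z →L[ℝ] X) (M : Submodule ℝ Z) :
    LinearMap.range ((restr T M) : ↥M →ₗ[ℝ] X) = M.map (T : Z →ₗ[ℝ] X) := by
  ext y
  constructor
  · rintro ⟨x, rfl⟩
    exact ⟨x, x.2, rfl⟩
  · rintro ⟨x, hx, rfl⟩
    exact ⟨⟨x, hx⟩, rfl⟩

/-- A linear equivalence `M ≃ₗ M.map (T : Z →ₗ[ℝ] X)` when `T` is bounded below on `M`. -/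
private def equivMap (T : Z →L[ℝ] X) (M : Submodule ℝ Z) (h : IsIsoOn T M) :
    ↥M ≃ₗ[ℝ] ↥(M.map (T : Z →ₗ[ℝ] X)) :=
  (LinearEquiv.ofInjective ((restr T M) : ↥M →ₗ[ℝ] X) (aux_restr_inj h)).trans
    (LinearEquiv.ofEq _ _ (aux_range_restr T M))

lemma aux_fd_of_map {T : Z →L[ℝ] X} {M : Submodule ℝ Z} (h : IsIsoOn T M)
    (hfd : FiniteDimensional ℝ (M.map (T : Z →ₗ[ℝ] X))) : FiniteDimensional ℝ M :=
  LinearEquiv.finiteDimensional (equivMap T M h).symm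

lemma aux_map_fd {T : Z →L[ℝ] X} {M : Submodule ℝ Z}
    (hfd : FiniteDimensional ℝ M) : FiniteDimensional ℝ (M.map (T : Z →ₗ[ℝ] X)) := by
  have : M.map (T : Z →ₗ[ℝ] X) = M.map (T : Z →ₗ[ℝ] X) := rfl
  rw [this]
  infer_instance

lemma aux_isClosed_map [CompleteSpace Z] {T : Z →L[ℝ] X} {M : Submodule ℝ Z}
    (hMc : IsClosed (M : Set Z)) (h : IsIsoOn T M) :
    IsClosed ((M.map (T : Z →ₗ[ℝ] X) : Submodule ℝ X) : Set X) := by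
  haveI : CompleteSpace M := hMc.completeSpace_coe
  obtain ⟨c, hc, hb⟩ := h
  have hanti : AntilipschitzWith (Real.toNNReal c)⁻¹ (restr T M) := by
    apply ContinuousLinearMap.antilipschitz_of_bound
    intro x
    have hbx := hb (x : Z) x.2
    have hr : ‖(restr T M) x‖ = ‖T (x : Z)‖ := rfl
    rw [NNReal.coe_inv, Real.coe_toNNReal c hc.le, hr]
    have h2 := mul_le_mul_of_nonneg_left hbx (inv_nonneg.mpr hc.le)
    rw [← mul_assoc, inv_mul_cancel₀ hc.ne', one_mul] at h2
    exact h2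
  have hcr : IsClosed (Set.range (restr T M)) :=
    hanti.isClosed_range (restr T M).uniformContinuous
  have : ((M.map (T : Z →ₗ[ℝ] X) : Submodule ℝ X) : Set X) = Set.range (restr T M) := by
    ext y
    constructor
    · rintro ⟨x, hx, rfl⟩
      exact ⟨⟨x, hx⟩, rfl⟩
    · rintro ⟨x, rfl⟩
      exact ⟨x, x.2, rfl⟩
  rw [this]
  exact hcr

end AuxProofs

section MainAux

variable (X : Type u) [NormedAddCommGroup X] [NormedSpace ℝ X] [CompleteSpace X]

lemma aux_one_two (hX : Subprojective X) :
    ∀ (Z : Type u) [NormedAddCommGroup Z] [NormedSpace ℝ Z] [CompleteSpace Z],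
      ∀ T : Z →L[ℝ] X, Improjective T → StrictlySingular T := by
  intro Z _ _ _ T hT
  rintro ⟨M, hMc, hMfd, hiso⟩
  have himc : IsClosed ((M.map (T : Z →ₗ[ℝ] X) : Submodule ℝ X) : Set X) := aux_isClosed_map hMc hiso
  have himfd : ¬FiniteDimensional ℝ (M.map (T : Z →ₗ[ℝ] X)) := fun h => hMfd (aux_fd_of_map hiso h)
  obtain ⟨N, hNle, hNc, hNfd, hNcomp⟩ := hX (M.map (T : Z →ₗ[ℝ] X)) himc himfd
  apply hT
  refine ⟨M ⊓ Submodule.comap (T : Z →ₗ[ℝ] X) N, ?_, ?_, ?_, ?_⟩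
  · exact hMc.inter (hNc.preimage T.continuous)
  · -- map of M' is N
    have hmap : (M ⊓ Submodule.comap (T : Z →ₗ[ℝ] X) N).map (T : Z →ₗ[ℝ] X) = N := by
      apply le_antisymm
      · rintro y ⟨x, ⟨_, hxN⟩, rfl⟩
        exact hxN
      · intro y hy
        obtain ⟨x, hxM, rfl⟩ := hNle hy
        exact ⟨x, ⟨hxM, hy⟩, rfl⟩
    intro hfd
    have hiso' : IsIsoOn T (M ⊓ Submodule.comap (T : Z →ₗ[ℝ] X) N) := by
      obtain ⟨c, hc, hb⟩ := hiso
      exact ⟨c, hc, fun x hx => hb x hx.1⟩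
    have := aux_map_fd (T := T) hfd
    rw [hmap] at this
    exact hNfd this
  · obtain ⟨c, hc, hb⟩ := hiso
    exact ⟨c, hc, fun x hx => hb x hx.1⟩
  · have hmap : (M ⊓ Submodule.comap (T : Z →ₗ[ℝ] X) N).map (T : Z →ₗ[ℝ] X) = N := by
      apply le_antisymm
      · rintro y ⟨x, ⟨_, hxN⟩, rfl⟩
        exact hxN
      · intro y hy
        obtain ⟨x, hxM, rfl⟩ := hNle hy
        exact ⟨x, ⟨hxM, hy⟩, rfl⟩
    rw [hmap]
    exact hNcomp

lemma aux_inj_not_ss {Z : Type u} [NormedAddCommGroup Z] [NormedSpace ℝ Z]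
    (J : Z →L[ℝ] X) (h : IsInjection J) : ¬StrictlySingular J := by
  intro hss
  apply hss
  obtain ⟨⟨c, hc, hb⟩, hrfd⟩ := h
  refine ⟨⊤, by simp, ?_, c, hc, fun x _ => hb x⟩
  intro hfd
  haveI : FiniteDimensional ℝ Z := by
    have e := Submodule.topEquiv (R := ℝ) (M := Z)
    exact e.finiteDimensional
  have : LinearMap.range (J : Z →ₗ[ℝ] X) = Submodule.map (J : Z →ₗ[ℝ] X) ⊤ := by
    rw [Submodule.map_top]
  rw [this] at hrfd
  exact hrfd inferInstance

lemma aux_three_one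
    (h : ∀ (Z : Type u) [NormedAddCommGroup Z] [NormedSpace ℝ Z] [CompleteSpace Z],
      ∀ J : Z →L[ℝ] X, IsInjection J → ¬Improjective J) : Subprojective X := by
  intro M hMc hMfd
  haveI : CompleteSpace M := hMc.completeSpace_coe
  set J : ↥M →L[ℝ] X := M.subtypeL with hJ
  have hinj : IsInjection J := by
    constructor
    · exact ⟨1, one_pos, fun x => by simp [hJ]⟩
    · rw [Submodule.range_subtypeL]
      exact hMfd
  have hni := h ↥M J hinj
  rw [Improjective, not_not] at hni
  obtain ⟨M', hM'c, hM'fd, hiso, hcomp⟩ := hni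
  refine ⟨M'.map (J : ↥M →ₗ[ℝ] X), ?_, ?_, ?_, hcomp⟩
  · rintro y ⟨x, _, rfl⟩
    exact x.2
  · have : ((M'.map (J : ↥M →ₗ[ℝ] X) : Submodule ℝ X) : Set X) = Subtype.val '' (M' : Set ↥M) := by
      ext y
      constructor
      · rintro ⟨x, hx, rfl⟩
        exact ⟨x, hx, rfl⟩
      · rintro ⟨x, hx, rfl⟩
        exact ⟨x, hx, rfl⟩
    rw [this]
    exact hMc.isClosedMap_subtype_val _ hM'c
  · intro hfd
    exact hM'fd (aux_fd_of_map hiso hfd)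

end MainAux

theorem statement0 (X : Type u) [NormedAddCommGroup X] [NormedSpace ℝ X] [CompleteSpace X] :
    (Subprojective X ↔
      ∀ (Z : Type u) [NormedAddCommGroup Z] [NormedSpace ℝ Z] [CompleteSpace Z],
        ∀ T : Z →L[ℝ] X, Improjective T → StrictlySingular T) ∧
    (Subprojective X ↔
      ∀ (Z : Type u) [NormedAddCommGroup Z] [NormedSpace ℝ Z] [CompleteSpace Z],
        ∀ J : Z →L[ℝ] X, IsInjection J → ¬Improjective J) := by
  have h12 := aux_one_two X
  have h31 := aux_three_one X
  have h23 : (∀ (Z : Type u) [NormedAddCommGroup Z] [NormedSpace ℝ Z] [CompleteSpace Z],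
      ∀ T : Z →L[ℝ] X, Improjective T → StrictlySingular T) →
      ∀ (Z : Type u) [NormedAddCommGroup Z] [NormedSpace ℝ Z] [CompleteSpace Z],
      ∀ J : Z →L[ℝ] X, IsInjection J → ¬Improjective J := by
    intro h2 Z _ _ _ J hJ hImp
    exact aux_inj_not_ss X J hJ (h2 Z J hImp)
  constructor
  · exact ⟨h12, fun h2 => h31 (h23 h2)⟩
  · exact ⟨fun h1 => h23 (h12 h1), h31⟩
end
end

section
/- For a Banach space X over the reals, the following are equivalent: (1) X is superprojective; (2) for every Banach space Y, every improjective bounded operator T : X → Y is strictly cosingular; (3) there exists no Banach space Y and improjective surjection Q : X → Y. -/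
open Filter Topology Metric

noncomputable section

universe u

section MainProof

/-- The continuous quotient map. -/
def mkQC {X : Type u} [NormedAddCommGroup X] [NormedSpace ℝ X] (M : Submodule ℝ X) :
    X →L[ℝ] X ⧸ M :=
  ⟨M.mkQ, continuous_quot_mk⟩

section Lemmas
variable {X : Type u} [NormedAddCommGroup X] [NormedSpace ℝ X] [CompleteSpace X]

set_option maxHeartbeats 1000000 in
theorem super_of_noImproj
    (h : ∀ (Y : Type u) [NormedAddCommGroup Y] [NormedSpace ℝ Y] [CompleteSpace Y],
        ∀ Q : X →L[ℝ] Y, IsSurjection Q → ¬Improjective Q) :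
    Superprojective X := by
  intro M hM hfd
  haveI : IsClosed (M : Set X) := hM
  set Q : X →L[ℝ] X ⧸ M := mkQC M with hQdef
  have hQsurj : Function.Surjective Q := Quot.mk_surjective
  have himp := h (X ⧸ M) Q ⟨hQsurj, hfd⟩
  rw [Improjective, not_not] at himp
  obtain ⟨V, hVc, hVfd, ⟨c, hc, hcb⟩, hcc⟩ := himp
  haveI : CompleteSpace V := hVc.completeSpace_coe
  have hVqc : IsClosed ((V.map (Q : X →ₗ[ℝ] X ⧸ M) : Submodule ℝ (X ⧸ M)) : Set (X ⧸ M)) := hcc.isClosed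
  haveI : CompleteSpace (V.map (Q : X →ₗ[ℝ] X ⧸ M) : Submodule ℝ (X ⧸ M)) := hVqc.completeSpace_coe
  obtain ⟨P, hP⟩ := hcc
  -- the isomorphism V ≃L V.map Q induced by Q
  set QV : V →L[ℝ] (V.map (Q : X →ₗ[ℝ] X ⧸ M) : Submodule ℝ (X ⧸ M)) :=
    (Q.comp V.subtypeL).codRestrict (V.map (Q : X →ₗ[ℝ] X ⧸ M)) (fun x => Submodule.mem_map_of_mem x.2) with hQVdef
  have hQVinj : LinearMap.ker (QV : V →ₗ[ℝ] (V.map (Q : X →ₗ[ℝ] X ⧸ M) : Submodule ℝ (X ⧸ M))) = ⊥ := by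
    rw [LinearMap.ker_eq_bot']
    intro a hab
    have hz : Q (a : X) = 0 := congrArg Subtype.val hab
    have h3 := hcb (a : X) a.2
    rw [hz, norm_zero] at h3
    have : ‖(a : X)‖ ≤ 0 := by nlinarith [norm_nonneg (a : X)]
    exact Subtype.ext (by rw [ZeroMemClass.coe_zero]; rwa [← norm_le_zero_iff])
  have hQVsurj : LinearMap.range (QV : V →ₗ[ℝ] (V.map (Q : X →ₗ[ℝ] X ⧸ M) : Submodule ℝ (X ⧸ M))) = ⊤ := by
    rw [LinearMap.range_eq_top]
    rintro ⟨z, hz⟩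
    obtain ⟨v, hv, rfl⟩ := hz
    exact ⟨⟨v, hv⟩, rfl⟩
  set e : V ≃L[ℝ] (V.map (Q : X →ₗ[ℝ] X ⧸ M) : Submodule ℝ (X ⧸ M)) :=
    ContinuousLinearEquiv.ofBijective QV hQVinj hQVsurj with hedef
  have he_apply : ∀ v : V, e v = QV v := fun v => by
    rw [hedef, ContinuousLinearEquiv.coeFn_ofBijective]
  set S : X →L[ℝ] X :=
    V.subtypeL.comp ((e.symm : (V.map (Q : X →ₗ[ℝ] X ⧸ M) : Submodule ℝ (X ⧸ M)) →L[ℝ] V).comp (P.comp Q))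
    with hSdef
  have hS_apply : ∀ x : X, S x = (e.symm (P (Q x)) : X) := fun x => rfl
  have hSV : ∀ v ∈ V, S v = v := by
    intro v hv
    have h1 : P (Q v) = ⟨Q v, Submodule.mem_map_of_mem hv⟩ := hP ⟨Q v, Submodule.mem_map_of_mem hv⟩
    rw [hS_apply, h1]
    have h2 : e ⟨v, hv⟩ = ⟨Q v, Submodule.mem_map_of_mem hv⟩ := by
      rw [he_apply]; rfl
    rw [← h2, ContinuousLinearEquiv.symm_apply_apply]
  have hSmemV : ∀ x : X, S x ∈ V := fun x => (e.symm (P (Q x))).2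
  have hSS : ∀ x : X, S (S x) = S x := fun x => hSV _ (hSmemV x)
  set N : Submodule ℝ X := LinearMap.ker (S : X →ₗ[ℝ] X) with hNdef
  have hMN : M ≤ N := by
    intro x hx
    have hQx : Q x = 0 := (Submodule.Quotient.mk_eq_zero M).2 hx
    show S x = 0
    rw [hS_apply, hQx, map_zero, map_zero, Submodule.coe_zero]
  refine ⟨N, hMN, ContinuousLinearMap.isClosed_ker S, ?_, ?_⟩
  · intro hfin
    apply hVfd
    have hinj : Function.Injective (N.mkQ.comp V.subtype) := by
      intro a b hab
      have : ((a : X) - (b : X)) ∈ N := by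
        rwa [← Submodule.Quotient.mk_eq_zero N, Submodule.Quotient.mk_sub,
          sub_eq_zero]
      have hz : S ((a : X) - (b : X)) = 0 := this
      rw [map_sub, hSV _ a.2, hSV _ b.2, sub_eq_zero] at hz
      exact Subtype.ext hz
    exact Module.Finite.of_injective (N.mkQ.comp V.subtype) hinj
  · refine ⟨(ContinuousLinearMap.id ℝ X - S).codRestrict N (fun x => ?_), fun x => ?_⟩
    · show S (x - S x) = 0
      rw [map_sub, hSS, sub_self]
    · apply Subtype.ext
      show (x : X) - S (x : X) = (x : X)
      have : S (x : X) = 0 := x.2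
      rw [this, sub_zero]

set_option maxHeartbeats 1600000 in
theorem cosing_of_super {Y : Type u} [NormedAddCommGroup Y] [NormedSpace ℝ Y]
    [CompleteSpace Y] (hX : Superprojective X) (T : X →L[ℝ] Y) (hT : Improjective T) :
    StrictlyCosingular T := by
  rintro ⟨N, hNc, hNfd, hsurj⟩
  haveI : IsClosed (N : Set Y) := hNc
  set q : Y →L[ℝ] Y ⧸ N := mkQC N with hqdef
  set S : X →L[ℝ] Y ⧸ N := q.comp T with hSdef
  have hSsurj : Function.Surjective S := hsurj
  set Slin : X →ₗ[ℝ] Y ⧸ N := (S : X →ₗ[ℝ] Y ⧸ N) with hSlindef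
  have hSlin : ∀ x : X, Slin x = S x := fun x => rfl
  have hSlinsurj : Function.Surjective Slin := hSsurj
  set K : Submodule ℝ X := LinearMap.ker Slin with hKdef
  have hKc : IsClosed (K : Set X) := by
    have h1 : (K : Set X) = S ⁻¹' {0} := by
      ext x
      simp [hKdef, LinearMap.mem_ker, hSlin]
    rw [h1]
    exact isClosed_singleton.preimage S.continuous
  have hKfd : ¬FiniteDimensional ℝ (X ⧸ K) := by
    intro hfin
    apply hNfd
    have hlift : Function.Surjective (K.liftQ Slin le_rfl) := by
      intro z
      obtain ⟨x, rfl⟩ := hSlinsurj z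
      exact ⟨Submodule.Quotient.mk x, Submodule.liftQ_apply _ _ _⟩
    exact Module.Finite.of_surjective _ hlift
  obtain ⟨W, hKW, hWc, hWfd, ⟨R, hR⟩⟩ := hX K hKc hKfd
  set π : X →L[ℝ] X := W.subtypeL.comp R with hπdef
  have hπW : ∀ w ∈ W, π w = w := fun w hw => congrArg Subtype.val (hR ⟨w, hw⟩)
  have hπmem : ∀ x, π x ∈ W := fun x => (R x).2
  set P1 : X →L[ℝ] X := ContinuousLinearMap.id ℝ X - π with hP1def
  have hP1_apply : ∀ x, P1 x = x - π x := fun _ => rfl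
  set V : Submodule ℝ X := LinearMap.ker (π : X →ₗ[ℝ] X) with hVdef
  have hVc : IsClosed (V : Set X) := ContinuousLinearMap.isClosed_ker π
  have hP1mem : ∀ x, P1 x ∈ V := by
    intro x
    show π (x - π x) = 0
    rw [map_sub, hπW _ (hπmem x), sub_self]
  have hP1V : ∀ v ∈ V, P1 v = v := by
    intro v hv
    have hv0 : π v = 0 := hv
    rw [hP1_apply, hv0, sub_zero]
  have hP1W : ∀ w ∈ W, P1 w = 0 := fun w hw => by rw [hP1_apply, hπW w hw, sub_self]
  set P1V : X →ₗ[ℝ] V := LinearMap.codRestrict V (P1 : X →ₗ[ℝ] X) hP1mem with hP1Vdef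
  have hP1V_apply : ∀ x : X, (P1V x : X) = P1 x := fun _ => rfl
  -- V is infinite-dimensional
  have hVfd : ¬FiniteDimensional ℝ V := by
    intro hfin
    apply hWfd
    have hWker : W ≤ LinearMap.ker P1V := by
      intro w hw
      show P1V w = 0
      apply Subtype.ext
      rw [hP1V_apply, hP1W w hw, ZeroMemClass.coe_zero]
    have hker' : LinearMap.ker P1V ≤ W := by
      intro x hx
      have hx1 : P1V x = 0 := hx
      have hx0 : P1 x = 0 := by
        rw [← hP1V_apply, hx1, ZeroMemClass.coe_zero]
      have h2 : x = π x := by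
        have h := hP1_apply x
        rw [hx0] at h
        exact sub_eq_zero.mp h.symm
      rw [h2]
      exact hπmem x
    have hginj : Function.Injective (W.liftQ P1V hWker) := by
      rw [← LinearMap.ker_eq_bot, Submodule.ker_liftQ_eq_bot _ _ _ hker']
    exact Module.Finite.of_injective (W.liftQ P1V hWker) hginj
  -- open mapping bound
  obtain ⟨C, hC0, hC⟩ := S.exists_preimage_norm_le hSsurj
  have hbound : ∀ x : X, ‖P1 x‖ ≤ ‖P1‖ * C * ‖S x‖ := by
    intro x
    obtain ⟨u, hu, hunorm⟩ := hC (S x)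
    have hxu : x - u ∈ K := by
      show Slin (x - u) = 0
      rw [map_sub]
      show S x - S u = 0
      rw [hu, sub_self]
    have h2 : P1 x = P1 u := by
      rw [← sub_eq_zero, ← map_sub]
      exact hP1W _ (hKW hxu)
    calc ‖P1 x‖ = ‖P1 u‖ := by rw [h2]
      _ ≤ ‖P1‖ * ‖u‖ := P1.le_opNorm u
      _ ≤ ‖P1‖ * (C * ‖S x‖) := by gcongr
      _ = ‖P1‖ * C * ‖S x‖ := (mul_assoc _ _ _).symm
  -- T is bounded below on V
  set c : ℝ := (‖P1‖ * C + 1)⁻¹ with hcdef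
  have hc1 : (0:ℝ) < ‖P1‖ * C + 1 := by positivity
  have hcpos : 0 < c := inv_pos.mpr hc1
  have hiso : ∀ v ∈ V, c * ‖v‖ ≤ ‖T v‖ := by
    intro v hv
    have h1 : ‖v‖ ≤ ‖P1‖ * C * ‖S v‖ := by
      have := hbound v
      rwa [hP1V v hv] at this
    have h2 : ‖S v‖ ≤ ‖T v‖ := Submodule.Quotient.norm_mk_le N (T v)
    have h3 : ‖v‖ ≤ (‖P1‖ * C + 1) * ‖T v‖ := by
      have h4 : ‖P1‖ * C * ‖S v‖ ≤ (‖P1‖ * C + 1) * ‖T v‖ := by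
        have hPC : (0:ℝ) ≤ ‖P1‖ * C := by positivity
        nlinarith [norm_nonneg (T v), norm_nonneg (S v)]
      linarith
    calc c * ‖v‖ ≤ c * ((‖P1‖ * C + 1) * ‖T v‖) :=
          mul_le_mul_of_nonneg_left h3 hcpos.le
      _ = ‖T v‖ := by rw [hcdef, ← mul_assoc, inv_mul_cancel₀ hc1.ne', one_mul]
  -- the projection of Y onto T(V)
  have hKV : K ≤ LinearMap.ker P1V := by
    intro x hx
    show P1V x = 0
    apply Subtype.ext
    rw [hP1V_apply, hP1W x (hKW hx), ZeroMemClass.coe_zero]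
  set E := LinearMap.quotKerEquivOfSurjective Slin hSlinsurj with hEdef
  have hE : ∀ x : X, E (Submodule.Quotient.mk x) = S x := fun x => rfl
  set Blin : (Y ⧸ N) →ₗ[ℝ] V := (K.liftQ P1V hKV).comp (E.symm : (Y ⧸ N) →ₗ[ℝ] X ⧸ K)
    with hBdef
  have hBS : ∀ x : X, Blin (S x) = P1V x := by
    intro x
    have h1 : E.symm (S x) = Submodule.Quotient.mk x := by
      rw [← hE x, LinearEquiv.symm_apply_apply]
    show (K.liftQ P1V hKV) (E.symm (S x)) = P1V x
    rw [h1, Submodule.liftQ_apply]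
  have hBbound : ∀ z : Y ⧸ N, ‖Blin z‖ ≤ ‖P1‖ * C * ‖z‖ := by
    intro z
    obtain ⟨u, hu, hunorm⟩ := hC z
    rw [← hu, hBS u]
    calc ‖P1V u‖ = ‖P1 u‖ := rfl
      _ ≤ ‖P1‖ * C * ‖S u‖ := hbound u
  set B : (Y ⧸ N) →L[ℝ] V := Blin.mkContinuous (‖P1‖ * C) hBbound with hBcdef
  have hB_apply : ∀ z, B z = Blin z := fun _ => rfl
  set F0 : Y →L[ℝ] Y := T.comp (V.subtypeL.comp (B.comp q)) with hF0def
  have hF0_apply : ∀ y : Y, F0 y = T ((B (q y) : X)) := fun _ => rfl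
  have hF0mem : ∀ y : Y, F0 y ∈ V.map (T : X →ₗ[ℝ] Y) := fun y => Submodule.mem_map_of_mem (B (q y)).2
  refine hT ⟨V, hVc, hVfd, ⟨c, hcpos, hiso⟩,
    ⟨F0.codRestrict (V.map (T : X →ₗ[ℝ] Y)) hF0mem, ?_⟩⟩
  rintro ⟨t, ht⟩
  obtain ⟨v, hv, rfl⟩ := ht
  apply Subtype.ext
  show F0 (T v) = T v
  have hqv : q (T v) = S v := rfl
  have hb : (B (q (T v)) : X) = v := by
    rw [hqv, hB_apply, hBS v, hP1V_apply, hP1V v hv]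
  rw [hF0_apply, hb]



end Lemmas

theorem false_of_surjection_cosing {X Y : Type u} [NormedAddCommGroup X] [NormedSpace ℝ X]
    [NormedAddCommGroup Y] [NormedSpace ℝ Y] (Q : X →L[ℝ] Y) (hQ : IsSurjection Q)
    (hsc : StrictlyCosingular Q) : False := by
  obtain ⟨hs, hfd⟩ := hQ
  refine hsc ⟨⊥, ?_, ?_, ?_⟩
  · rw [Submodule.bot_coe]
    exact isClosed_singleton
  · intro hfin
    exact hfd (Module.Finite.equiv (Submodule.quotEquivOfEqBot (⊥ : Submodule ℝ Y) rfl))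
  · intro z
    obtain ⟨y, hy⟩ := Submodule.Quotient.mk_surjective (⊥ : Submodule ℝ Y) z
    obtain ⟨x, rfl⟩ := hs y
    exact ⟨x, hy⟩



theorem statement1 (X : Type u) [NormedAddCommGroup X] [NormedSpace ℝ X] [CompleteSpace X] :
    (Superprojective X ↔
      ∀ (Y : Type u) [NormedAddCommGroup Y] [NormedSpace ℝ Y] [CompleteSpace Y],
        ∀ T : X →L[ℝ] Y, Improjective T → StrictlyCosingular T) ∧
    (Superprojective X ↔
      ∀ (Y : Type u) [NormedAddCommGroup Y] [NormedSpace ℝ Y] [CompleteSpace Y],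
        ∀ Q : X →L[ℝ] Y, IsSurjection Q → ¬Improjective Q) := by
  have h12 : Superprojective X →
      ∀ (Y : Type u) [NormedAddCommGroup Y] [NormedSpace ℝ Y] [CompleteSpace Y],
        ∀ T : X →L[ℝ] Y, Improjective T → StrictlyCosingular T := by
    intro h1 Y _ _ _ T hT
    exact cosing_of_super h1 T hT
  have h23 : (∀ (Y : Type u) [NormedAddCommGroup Y] [NormedSpace ℝ Y] [CompleteSpace Y],
        ∀ T : X →L[ℝ] Y, Improjective T → StrictlyCosingular T) →
      ∀ (Y : Type u) [NormedAddCommGroup Y] [NormedSpace ℝ Y] [CompleteSpace Y],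
        ∀ Q : X →L[ℝ] Y, IsSurjection Q → ¬Improjective Q := by
    intro h2 Y _ _ _ Q hQ himp
    exact false_of_surjection_cosing Q hQ (h2 Y Q himp)
  have h31 : (∀ (Y : Type u) [NormedAddCommGroup Y] [NormedSpace ℝ Y] [CompleteSpace Y],
        ∀ Q : X →L[ℝ] Y, IsSurjection Q → ¬Improjective Q) → Superprojective X :=
    super_of_noImproj
  exact ⟨⟨h12, fun h2 => h31 (h23 h2)⟩, ⟨fun h1 => h23 (h12 h1), h31⟩⟩

end MainProof
end
end

section
/- Every Banach space that is hereditarily ℓ₁ and admits a (countable or uncountable) unconditional basis is subprojective. -/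
open Filter Topology Metric

noncomputable section

universe u

section AuxiliaryForStatement6

variable {X : Type u} [NormedAddCommGroup X] [NormedSpace ℝ X]

theorem exists_rep [CompleteSpace X] {Γ : Type u} (e : Γ → X)
    (hb : ∀ x : X, ∃! a : Γ → ℝ, HasSum (fun γ => a γ • e γ) x) :
    ∃ (Rep : X →ₗ[ℝ] (Γ → ℝ)) (K : ℝ), 1 ≤ K ∧
      (∀ x, HasSum (fun γ => Rep x γ • e γ) x) ∧
      (∀ x (a : Γ → ℝ), HasSum (fun γ => a γ • e γ) x → a = Rep x) ∧
      (∀ (F : Finset Γ) (x : X), ‖∑ γ ∈ F, Rep x γ • e γ‖ ≤ K * ‖x‖) := by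
  classical
  have hbx : ∀ x : X, ∃ a : Γ → ℝ, HasSum (fun γ => a γ • e γ) x := fun x => (hb x).exists
  choose rep hrep using hbx
  have huniq : ∀ (x : X) (a : Γ → ℝ), HasSum (fun γ => a γ • e γ) x → a = rep x :=
    fun x a ha => (hb x).unique ha (hrep x)
  have hadd : ∀ x y : X, rep (x + y) = rep x + rep y := by
    intro x y
    refine (huniq (x + y) (rep x + rep y) ?_).symm
    have := (hrep x).add (hrep y)
    simpa [add_smul] using this
  have hsmul : ∀ (c : ℝ) (x : X), rep (c • x) = c • rep x := by
    intro c x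
    refine (huniq (c • x) (c • rep x) ?_).symm
    have := (hrep x).const_smul c
    simpa [smul_smul] using this
  -- e γ ≠ 0
  have hrep0 : rep 0 = 0 := by
    refine (huniq 0 0 ?_).symm
    simpa using (hasSum_zero : HasSum (fun _ : Γ => (0:X)) 0)
  have he : ∀ γ, e γ ≠ 0 := by
    intro γ0 h0
    have h : HasSum (fun γ => (fun γ => if γ = γ0 then (1:ℝ) else 0) γ • e γ) 0 := by
      have : (fun γ => (if γ = γ0 then (1:ℝ) else 0) • e γ) = fun _ => (0:X) := by
        funext γ
        by_cases h : γ = γ0 <;> simp [h, h0]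
      rw [this]; exact hasSum_zero
    have := huniq 0 _ h
    rw [hrep0] at this
    have := congrFun this γ0
    simp at this
  -- bounded partial sums
  have bdd : ∀ x : X, ∃ R : ℝ, ∀ F : Finset Γ, ‖∑ γ ∈ F, rep x γ • e γ‖ ≤ R := by
    intro x
    have hs : Summable (fun γ => rep x γ • e γ) := (hrep x).summable
    obtain ⟨s, hs1⟩ := hs.vanishing (Metric.ball_mem_nhds 0 one_pos)
    refine ⟨1 + ∑ γ ∈ s, ‖rep x γ • e γ‖, fun F => ?_⟩
    have hsplit : ∑ γ ∈ F, rep x γ • e γ =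
        (∑ γ ∈ F ∩ s, rep x γ • e γ) + ∑ γ ∈ F \ s, rep x γ • e γ :=
      (Finset.sum_inter_add_sum_sdiff F s _).symm
    have h1 : ‖∑ γ ∈ F ∩ s, rep x γ • e γ‖ ≤ ∑ γ ∈ s, ‖rep x γ • e γ‖ :=
      le_trans (norm_sum_le _ _)
        (Finset.sum_le_sum_of_subset_of_nonneg Finset.inter_subset_right
          (fun _ _ _ => norm_nonneg _))
    have h2 : ‖∑ γ ∈ F \ s, rep x γ • e γ‖ ≤ 1 := by
      have := hs1 (F \ s) (Finset.disjoint_sdiff.symm.mono_left le_rfl)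
      have := mem_ball_zero_iff.1 this
      linarith
    calc ‖∑ γ ∈ F, rep x γ • e γ‖ ≤ _ + _ := hsplit ▸ norm_add_le _ _
      _ ≤ 1 + ∑ γ ∈ s, ‖rep x γ • e γ‖ := by linarith
  choose Rbd hRbd using bdd
  -- the embedding into bounded functions
  letI : TopologicalSpace (Finset Γ) := ⊥
  haveI : DiscreteTopology (Finset Γ) := ⟨rfl⟩
  set Z := BoundedContinuousFunction (Finset Γ) X with hZ
  set Jf : X → Z := fun x => BoundedContinuousFunction.ofNormedAddCommGroup
    (fun F => ∑ γ ∈ F, rep x γ • e γ) (continuous_of_discreteTopology) (Rbd x) (hRbd x) with hJf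
  have hJcoe : ∀ x F, Jf x F = ∑ γ ∈ F, rep x γ • e γ := fun x F => rfl
  set J : X →ₗ[ℝ] Z :=
    { toFun := Jf
      map_add' := by
        intro x y
        ext F
        show _ = Jf x F + Jf y F
        simp [hJcoe, hadd, add_smul, Finset.sum_add_distrib]
      map_smul' := by
        intro c x
        ext F
        show _ = c • (Jf x F)
        simp [hJcoe, hsmul, smul_smul, Finset.smul_sum] } with hJdef
  have hJapp : ∀ x F, J x F = ∑ γ ∈ F, rep x γ • e γ := fun x F => rfl
  have hFle : ∀ (x : X) (F : Finset Γ), ‖∑ γ ∈ F, rep x γ • e γ‖ ≤ ‖J x‖ := by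
    intro x F
    have := BoundedContinuousFunction.norm_coe_le_norm (J x) F
    simpa [hJapp] using this
  have hxJ : ∀ x : X, ‖x‖ ≤ ‖J x‖ := by
    intro x
    have ht : Tendsto (fun F : Finset Γ => ‖∑ γ ∈ F, rep x γ • e γ‖) atTop (𝓝 ‖x‖) :=
      (hrep x).norm
    exact le_of_tendsto ht (Eventually.of_forall (fun F => hFle x F))
  have hinj : Function.Injective J := by
    intro x y hxy
    have : ‖x - y‖ ≤ ‖J (x - y)‖ := hxJ _
    rw [map_sub, hxy, sub_self, norm_zero] at this
    have := le_antisymm this (norm_nonneg _)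
    rwa [norm_eq_zero, sub_eq_zero] at this
  have hsub : ∀ x y : X, rep (x - y) = rep x - rep y := by
    intro x y
    have h1 : rep (x - y) + rep y = rep x := by rw [← hadd, sub_add_cancel]
    funext γ
    have := congrFun h1 γ
    simp only [Pi.add_apply, Pi.sub_apply] at this ⊢
    linarith
  set W : Submodule ℝ Z := LinearMap.range J with hW
  have hWclosed : IsClosed (W : Set Z) := by
    refine IsSeqClosed.isClosed ?_
    intro u w hu hconv
    have hu' : ∀ n, ∃ y : X, J y = u n := fun n => LinearMap.mem_range.1 (hu n)
    choose xs hxs using hu'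
    have hcu : CauchySeq u := hconv.cauchySeq
    have hdist : ∀ i j, dist (xs i) (xs j) ≤ dist (u i) (u j) := by
      intro i j
      rw [dist_eq_norm, dist_eq_norm, ← hxs i, ← hxs j, ← map_sub]
      exact hxJ _
    have hcx : CauchySeq xs := by
      rw [Metric.cauchySeq_iff]
      intro ε hε
      obtain ⟨N, hN⟩ := Metric.cauchySeq_iff.1 hcu ε hε
      exact ⟨N, fun m hm n hn => lt_of_le_of_lt (hdist m n) (hN m hm n hn)⟩
    obtain ⟨x, hxt⟩ := cauchySeq_tendsto_of_complete hcx
    have hsum_sub : ∀ (y y' : X) (F : Finset Γ),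
        ∑ γ ∈ F, rep y γ • e γ - ∑ γ ∈ F, rep y' γ • e γ
          = ∑ γ ∈ F, rep (y - y') γ • e γ := by
      intro y y' F
      rw [← Finset.sum_sub_distrib]
      refine Finset.sum_congr rfl (fun γ _ => ?_)
      rw [hsub]
      simp [sub_smul]
    have hSF_dist : ∀ (i j : ℕ) (F : Finset Γ),
        dist (∑ γ ∈ F, rep (xs i) γ • e γ) (∑ γ ∈ F, rep (xs j) γ • e γ)
          ≤ dist (u i) (u j) := by
      intro i j F
      rw [dist_eq_norm, dist_eq_norm, ← hxs i, ← hxs j, ← map_sub, hsum_sub]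
      exact hFle _ F
    have hcoord : ∀ γ : Γ, ∃ bγ : ℝ, Tendsto (fun j => rep (xs j) γ) atTop (𝓝 bγ) := by
      intro γ
      have hepos : (0:ℝ) < ‖e γ‖ := norm_pos_iff.2 (he γ)
      have hc : CauchySeq (fun j => rep (xs j) γ) := by
        rw [Metric.cauchySeq_iff]
        intro ε hε
        obtain ⟨N, hN⟩ := Metric.cauchySeq_iff.1 hcu (ε * ‖e γ‖) (mul_pos hε hepos)
        refine ⟨N, fun m hm n hn => ?_⟩
        have h1 : dist (rep (xs m) γ) (rep (xs n) γ) * ‖e γ‖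
            = dist (∑ γ' ∈ ({γ} : Finset Γ), rep (xs m) γ' • e γ')
                (∑ γ' ∈ ({γ} : Finset Γ), rep (xs n) γ' • e γ') := by
          rw [Finset.sum_singleton, Finset.sum_singleton,
            dist_eq_norm (rep (xs m) γ • e γ), ← sub_smul, norm_smul,
            Real.dist_eq, Real.norm_eq_abs]
        have h2 := (h1 ▸ hSF_dist m n {γ}).trans_lt (hN m hm n hn)
        exact lt_of_mul_lt_mul_right h2 (le_of_lt hepos)
      exact cauchySeq_tendsto_of_complete hc
    choose b hbt using hcoord
    have hTF : ∀ F : Finset Γ, Tendsto (fun j => ∑ γ ∈ F, rep (xs j) γ • e γ) atTop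
        (𝓝 (∑ γ ∈ F, b γ • e γ)) :=
      fun F => tendsto_finset_sum F (fun γ _ => (hbt γ).smul_const (e γ))
    have hwF : ∀ F : Finset Γ, w F = ∑ γ ∈ F, b γ • e γ := by
      intro F
      have h1 : Tendsto (fun j => u j F) atTop (𝓝 (w F)) := by
        refine tendsto_iff_dist_tendsto_zero.2 ?_
        refine squeeze_zero (fun j => dist_nonneg)
          (fun j => BoundedContinuousFunction.dist_coe_le_dist F) ?_
        exact tendsto_iff_dist_tendsto_zero.1 hconv
      have h2 : (fun j => u j F) = fun j => ∑ γ ∈ F, rep (xs j) γ • e γ := by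
        funext j; rw [← hxs j]; rfl
      rw [h2] at h1
      exact tendsto_nhds_unique h1 (hTF F)
    have hbsum : HasSum (fun γ => b γ • e γ) x := by
      have : Tendsto (fun F : Finset Γ => ∑ γ ∈ F, b γ • e γ) atTop (𝓝 x) := by
        rw [Metric.tendsto_nhds]
        intro ε hε
        have hδ : (0:ℝ) < ε/4 := by linarith
        obtain ⟨N, hN⟩ := Metric.cauchySeq_iff.1 hcu (ε/4) hδ
        have fact1 : ∀ F : Finset Γ,
            dist (∑ γ ∈ F, b γ • e γ) (∑ γ ∈ F, rep (xs N) γ • e γ) ≤ ε/4 := by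
          intro F
          have ht := (hTF F).dist
            (tendsto_const_nhds (x := ∑ γ ∈ F, rep (xs N) γ • e γ) (f := atTop (α := ℕ)))
          refine le_of_tendsto ht ?_
          filter_upwards [eventually_ge_atTop N] with i hi
          exact (hSF_dist i N F).trans (le_of_lt (hN i hi N le_rfl))
        have fact2 : dist x (xs N) ≤ ε/4 := by
          have ht := hxt.dist (tendsto_const_nhds (x := xs N) (f := atTop (α := ℕ)))
          refine le_of_tendsto ht ?_
          filter_upwards [eventually_ge_atTop N] with i hi
          exact (hdist i N).trans (le_of_lt (hN i hi N le_rfl))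
        obtain ⟨F0, hF0⟩ : ∃ F0 : Finset Γ, ∀ F ≥ F0,
            dist (∑ γ ∈ F, rep (xs N) γ • e γ) (xs N) < ε/4 :=
          eventually_atTop.1 (Metric.tendsto_nhds.1 (hrep (xs N)) (ε/4) hδ)
        rw [eventually_atTop]
        refine ⟨F0, fun F hF => ?_⟩
        calc dist (∑ γ ∈ F, b γ • e γ) x
            ≤ dist (∑ γ ∈ F, b γ • e γ) (∑ γ ∈ F, rep (xs N) γ • e γ)
              + dist (∑ γ ∈ F, rep (xs N) γ • e γ) (xs N) + dist (xs N) x :=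
              dist_triangle4 _ _ _ _
          _ < ε/4 + ε/4 + ε/4 := by
              have := hF0 F hF
              have h3 : dist (xs N) x ≤ ε/4 := by rw [dist_comm]; exact fact2
              have h1 := fact1 F
              rcases lt_or_eq_of_le h3 with h | h
              · linarith
              · linarith
          _ < ε := by linarith
      exact this
    have hbx : b = rep x := huniq x b hbsum
    show w ∈ W
    rw [hW, LinearMap.mem_range]
    refine ⟨x, ?_⟩
    ext F
    rw [hJapp, hwF, hbx]
  haveI : CompleteSpace W := hWclosed.completeSpace_coe
  let eqJ : X ≃ₗ[ℝ] W := LinearEquiv.ofInjective J hinj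
  have heqJ : ∀ x : X, ((eqJ x : W) : Z) = J x := fun x => rfl
  have hπle : ∀ w : W, ‖eqJ.symm.toLinearMap w‖ ≤ 1 * ‖w‖ := by
    intro w
    obtain ⟨x0, hx0⟩ := LinearMap.mem_range.1 w.2
    have hw : eqJ x0 = w := Subtype.ext (by rw [heqJ, hx0])
    have h1 : eqJ.symm.toLinearMap w = x0 := by
      rw [← hw]; exact eqJ.symm_apply_apply x0
    rw [h1, one_mul]
    have : ‖w‖ = ‖J x0‖ := by rw [← hw]; rfl
    rw [this]
    exact hxJ x0
  let πc : W →L[ℝ] X := eqJ.symm.toLinearMap.mkContinuous 1 hπle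
  have hπc : ∀ w : W, πc w = eqJ.symm w := fun w => rfl
  have hker : LinearMap.ker (πc : W →ₗ[ℝ] X) = ⊥ := by
    rw [LinearMap.ker_eq_bot]
    intro a b hab
    have : eqJ.symm a = eqJ.symm b := by rw [← hπc, ← hπc]; exact hab
    exact eqJ.symm.injective this
  have hrange : LinearMap.range (πc : W →ₗ[ℝ] X) = ⊤ := by
    rw [LinearMap.range_eq_top]
    intro x
    exact ⟨eqJ x, by show πc (eqJ x) = x; rw [hπc, eqJ.symm_apply_apply]⟩
  let equiv : W ≃L[ℝ] X := ContinuousLinearEquiv.ofBijective πc hker hrange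
  set K0 : ℝ := ‖(equiv.symm : X →L[ℝ] W)‖ with hK0
  have hsymm : ∀ x : X, ((equiv.symm x : W) : Z) = J x := by
    intro x
    have h1 : equiv (eqJ x) = x := by
      show πc (eqJ x) = x
      rw [hπc, eqJ.symm_apply_apply]
    have h2 : equiv.symm x = eqJ x := by
      conv_lhs => rw [← h1]
      exact equiv.symm_apply_apply (eqJ x)
    rw [h2, heqJ]
  have hJnorm : ∀ x : X, ‖J x‖ ≤ K0 * ‖x‖ := by
    intro x
    have h1 : ‖(equiv.symm : X →L[ℝ] W) x‖ ≤ K0 * ‖x‖ :=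
      (equiv.symm : X →L[ℝ] W).le_opNorm x
    have h2 : ‖(equiv.symm : X →L[ℝ] W) x‖ = ‖J x‖ := by
      have : ((equiv.symm : X →L[ℝ] W) x : Z) = J x := hsymm x
      rw [← this]; rfl
    rw [← h2]; exact h1
  refine ⟨{ toFun := rep, map_add' := hadd, map_smul' := hsmul }, max K0 1,
    le_max_right _ _, hrep, huniq, ?_⟩
  intro F x
  have h1 : ‖∑ γ ∈ F, rep x γ • e γ‖ ≤ K0 * ‖x‖ := (hFle x F).trans (hJnorm x)
  have h2 : K0 * ‖x‖ ≤ max K0 1 * ‖x‖ :=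
    mul_le_mul_of_nonneg_right (le_max_left _ _) (norm_nonneg _)
  exact h1.trans h2

theorem exists_l1_seq {N : Submodule ℝ X} (T : N ≃L[ℝ] lp (fun _ : ℕ => ℝ) 1) :
    ∃ (v : ℕ → X) (c C : ℝ), 0 < c ∧ 0 < C ∧ (∀ n, v n ∈ N) ∧
      (∀ (s : Finset ℕ) (a : ℕ → ℝ),
        c * ∑ k ∈ s, |a k| ≤ ‖∑ k ∈ s, a k • v k‖ ∧
        ‖∑ k ∈ s, a k • v k‖ ≤ C * ∑ k ∈ s, |a k|) := by
  classical
  set sgl : ℕ → lp (fun _ : ℕ => ℝ) 1 := fun k => lp.single 1 k (1:ℝ) with hsgl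
  set v : ℕ → X := fun k => ((T.symm (sgl k) : N) : X) with hv
  set CT : ℝ := max ‖(T : N →L[ℝ] lp (fun _ : ℕ => ℝ) 1)‖ 1 with hCT
  set CS : ℝ := max ‖(T.symm : lp (fun _ : ℕ => ℝ) 1 →L[ℝ] N)‖ 1 with hCS
  have hCTpos : (0:ℝ) < CT := lt_of_lt_of_le one_pos (le_max_right _ _)
  have hCSpos : (0:ℝ) < CS := lt_of_lt_of_le one_pos (le_max_right _ _)
  -- norm of finite combinations of singles
  have hnorm : ∀ (s : Finset ℕ) (a : ℕ → ℝ),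
      ‖∑ k ∈ s, a k • sgl k‖ = ∑ k ∈ s, |a k| := by
    intro s a
    have hcoe : ∀ i : ℕ, ((∑ k ∈ s, a k • sgl k : lp (fun _ : ℕ => ℝ) 1) : ℕ → ℝ) i
        = if i ∈ s then a i else 0 := by
      intro i
      rw [lp.coeFn_sum]
      have : (∑ k ∈ s, ((a k • sgl k : lp (fun _ : ℕ => ℝ) 1) : ℕ → ℝ)) i
          = ∑ k ∈ s, a k * (if i = k then (1:ℝ) else 0) := by
        rw [Finset.sum_apply]
        refine Finset.sum_congr rfl (fun k _ => ?_)
        rw [lp.coeFn_smul]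
        simp only [Pi.smul_apply, smul_eq_mul]
        congr 1
        rw [hsgl]
        simp [lp.single_apply, Pi.single_apply]
      rw [this]
      simp only [mul_ite, mul_one, mul_zero]
      simp [Finset.sum_ite_eq s i a]
    have h1 : ‖(∑ k ∈ s, a k • sgl k : lp (fun _ : ℕ => ℝ) 1)‖
        = (∑' i : ℕ, ‖((∑ k ∈ s, a k • sgl k : lp (fun _ : ℕ => ℝ) 1) : ℕ → ℝ) i‖ ^ (1:ℝ)) ^ ((1:ℝ)/1) := by
      have := lp.norm_eq_tsum_rpow (p := 1) (by norm_num) (∑ k ∈ s, a k • sgl k)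
      simpa using this
    rw [h1]
    have h2 : (fun i : ℕ => ‖((∑ k ∈ s, a k • sgl k : lp (fun _ : ℕ => ℝ) 1) : ℕ → ℝ) i‖ ^ (1:ℝ))
        = fun i => if i ∈ s then |a i| else 0 := by
      funext i
      rw [hcoe i]
      by_cases h : i ∈ s <;> simp [h, Real.norm_eq_abs]
    rw [h2]
    have h3 : (∑' i : ℕ, if i ∈ s then |a i| else 0) = ∑ i ∈ s, |a i| := by
      rw [tsum_eq_sum (s := s)]
      · exact Finset.sum_congr rfl (fun i hi => by simp [hi])
      · intro i hi; simp [hi]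
    rw [h3]
    simp
  -- sum identity
  have hsum : ∀ (s : Finset ℕ) (a : ℕ → ℝ),
      ∑ k ∈ s, a k • v k = ((T.symm (∑ k ∈ s, a k • sgl k) : N) : X) := by
    intro s a
    rw [map_sum]
    push_cast
    refine Finset.sum_congr rfl (fun k _ => ?_)
    rw [map_smul]
    rfl
  refine ⟨v, 1/CT, CS, by positivity, hCSpos, fun n => (T.symm (sgl n)).2, ?_⟩
  intro s a
  set w : lp (fun _ : ℕ => ℝ) 1 := ∑ k ∈ s, a k • sgl k with hw
  have hnv : ‖∑ k ∈ s, a k • v k‖ = ‖T.symm w‖ := by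
    rw [hsum, ← Submodule.coe_norm]
  constructor
  · rw [hnv]
    rw [div_mul_eq_mul_div, one_mul, div_le_iff₀ hCTpos]
    have h1 : ∑ k ∈ s, |a k| = ‖w‖ := (hnorm s a).symm
    rw [h1]
    have h2 : ‖w‖ = ‖T (T.symm w)‖ := by rw [T.apply_symm_apply]
    have h3 : ‖T (T.symm w)‖ ≤ ‖(T : N →L[ℝ] lp (fun _ : ℕ => ℝ) 1)‖ * ‖T.symm w‖ :=
      (T : N →L[ℝ] lp (fun _ : ℕ => ℝ) 1).le_opNorm _
    have h4 : ‖(T : N →L[ℝ] lp (fun _ : ℕ => ℝ) 1)‖ * ‖T.symm w‖ ≤ CT * ‖T.symm w‖ :=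
      mul_le_mul_of_nonneg_right (le_max_left _ _) (norm_nonneg _)
    calc ‖w‖ = ‖T (T.symm w)‖ := h2
      _ ≤ _ := h3
      _ ≤ CT * ‖T.symm w‖ := h4
      _ = ‖T.symm w‖ * CT := by ring
  · rw [hnv]
    have h3 : ‖T.symm w‖ ≤ ‖(T.symm : lp (fun _ : ℕ => ℝ) 1 →L[ℝ] N)‖ * ‖w‖ :=
      (T.symm : lp (fun _ : ℕ => ℝ) 1 →L[ℝ] N).le_opNorm _
    have h4 : ‖w‖ = ∑ k ∈ s, |a k| := hnorm s a
    rw [h4] at h3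
    refine h3.trans (mul_le_mul_of_nonneg_right (le_max_left _ _) ?_)
    exact Finset.sum_nonneg (fun k _ => abs_nonneg _)

theorem selection {Γ : Type u} (e : Γ → X) (Rep : X →ₗ[ℝ] (Γ → ℝ)) (K : ℝ) (hK1 : 1 ≤ K)
    (hrep : ∀ x, HasSum (fun γ => Rep x γ • e γ) x)
    (hKb : ∀ (F : Finset Γ) (x : X), ‖∑ γ ∈ F, Rep x γ • e γ‖ ≤ K * ‖x‖)
    (he : ∀ γ, e γ ≠ 0)
    (v : ℕ → X) (C : ℝ) (hvC : ∀ n, ‖v n‖ ≤ C) (ε : ℝ) (hε : 0 < ε) :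
    ∃ (nn mm : ℕ → ℕ) (B : ℕ → Finset Γ),
      (∀ k, nn k < mm k) ∧ (∀ k, mm k < nn (k+1)) ∧
      (∀ j k, j ≠ k → Disjoint (B j) (B k)) ∧
      (∀ k, ‖((2:ℝ)⁻¹ • (v (nn k) - v (mm k))) -
          ∑ γ ∈ B k, Rep ((2:ℝ)⁻¹ • (v (nn k) - v (mm k))) γ • e γ‖ ≤ ε) := by
  classical
  have hC0 : (0:ℝ) ≤ C := le_trans (norm_nonneg _) (hvC 0)
  have hKsingle : ∀ (x : X) (γ : Γ), |Rep x γ| * ‖e γ‖ ≤ K * ‖x‖ := by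
    intro x γ
    have := hKb {γ} x
    rw [Finset.sum_singleton, norm_smul, Real.norm_eq_abs] at this
    exact this
  -- the one-step lemma
  have key : ∀ (G : Finset Γ) (N₀ : ℕ), ∃ t : ℕ × ℕ × Finset Γ,
      N₀ ≤ t.1 ∧ t.1 < t.2.1 ∧ Disjoint t.2.2 G ∧
      ‖((2:ℝ)⁻¹ • (v t.1 - v t.2.1)) -
        ∑ γ ∈ t.2.2, Rep ((2:ℝ)⁻¹ • (v t.1 - v t.2.1)) γ • e γ‖ ≤ ε := by
    intro G N₀
    set Se : ℝ := ∑ γ ∈ G, ‖e γ‖ with hSe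
    have hSe0 : 0 ≤ Se := Finset.sum_nonneg (fun γ _ => norm_nonneg _)
    set δ : ℝ := ε / (2 * (Se + 1)) with hδ
    have hδpos : 0 < δ := by positivity
    -- compactness pigeonhole on coordinates over G
    set R : ↑G → ℝ := fun γ => K * C / ‖e (γ:Γ)‖ with hR
    set Kset : Set (↑G → ℝ) := Set.univ.pi (fun γ => Metric.closedBall (0:ℝ) (R γ)) with hKset
    have hKcomp : IsCompact Kset := isCompact_univ_pi (fun γ => isCompact_closedBall _ _)
    set uu : ℕ → (↑G → ℝ) := fun j γ => Rep (v (N₀ + j)) (γ:Γ) with huu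
    have humem : ∀ j, uu j ∈ Kset := by
      intro j
      rw [hKset, Set.mem_univ_pi]
      intro γ
      rw [Metric.mem_closedBall, Real.dist_eq, sub_zero]
      have hpos : (0:ℝ) < ‖e (γ:Γ)‖ := norm_pos_iff.2 (he _)
      rw [hR]
      rw [le_div_iff₀ hpos]
      calc |Rep (v (N₀ + j)) (γ:Γ)| * ‖e (γ:Γ)‖ ≤ K * ‖v (N₀ + j)‖ := hKsingle _ _
        _ ≤ K * C := by
            exact mul_le_mul_of_nonneg_left (hvC _) (le_trans zero_le_one hK1)
    obtain ⟨L, _, φ, hφ, hconv⟩ := hKcomp.tendsto_subseq humem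
    obtain ⟨J, hJ⟩ := (Metric.tendsto_atTop.1 hconv) (δ/2) (by positivity)
    set n : ℕ := N₀ + φ J with hn
    set m : ℕ := N₀ + φ (J+1) with hm
    have hnm : n < m := by
      have h : φ J < φ (J+1) := hφ (by omega)
      omega
    have hcoords : ∀ γ ∈ G, |Rep (v n) γ - Rep (v m) γ| ≤ δ := by
      intro γ hγ
      have h1 := hJ J le_rfl
      have h2 := hJ (J+1) (Nat.le_succ J)
      have h3 : dist ((uu ∘ φ) J) ((uu ∘ φ) (J+1)) < δ := by
        calc dist ((uu ∘ φ) J) ((uu ∘ φ) (J+1))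
            ≤ dist ((uu ∘ φ) J) L + dist L ((uu ∘ φ) (J+1)) := dist_triangle _ _ _
          _ < δ/2 + δ/2 := by rw [dist_comm L]; exact add_lt_add h1 h2
          _ = δ := by ring
      have h4 := (dist_le_pi_dist ((uu ∘ φ) J) ((uu ∘ φ) (J+1)) ⟨γ, hγ⟩).trans (le_of_lt h3)
      rw [Real.dist_eq] at h4
      exact h4
    set zd : X := (2:ℝ)⁻¹ • (v n - v m) with hzd
    have hzdcoord : ∀ γ ∈ G, |Rep zd γ| ≤ δ/2 := by
      intro γ hγ
      have h1 : Rep zd γ = (2:ℝ)⁻¹ * (Rep (v n) γ - Rep (v m) γ) := by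
        rw [hzd, map_smul, map_sub]
        rfl
      rw [h1, abs_mul]
      have : |((2:ℝ)⁻¹)| = (2:ℝ)⁻¹ := by norm_num
      rw [this]
      have := hcoords γ hγ
      have h2 : |Rep (v n) γ - Rep (v m) γ| ≤ δ := this
      linarith [mul_le_mul_of_nonneg_left h2 (by norm_num : (0:ℝ) ≤ (2:ℝ)⁻¹)]
    have hSG : ‖∑ γ ∈ G, Rep zd γ • e γ‖ ≤ (δ/2) * (Se + 1) := by
      calc ‖∑ γ ∈ G, Rep zd γ • e γ‖ ≤ ∑ γ ∈ G, ‖Rep zd γ • e γ‖ := norm_sum_le _ _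
        _ ≤ ∑ γ ∈ G, (δ/2) * ‖e γ‖ := by
            refine Finset.sum_le_sum (fun γ hγ => ?_)
            rw [norm_smul, Real.norm_eq_abs]
            exact mul_le_mul_of_nonneg_right (hzdcoord γ hγ) (norm_nonneg _)
        _ = (δ/2) * Se := by rw [← Finset.mul_sum]
        _ ≤ (δ/2) * (Se + 1) := by nlinarith
    -- choose the block
    obtain ⟨F0, hF0⟩ : ∃ F0 : Finset Γ, ∀ F ≥ F0,
        dist (∑ γ ∈ F, Rep zd γ • e γ) zd < ε/2 :=
      eventually_atTop.1 (Metric.tendsto_nhds.1 (hrep zd) (ε/2) (by positivity))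
    refine ⟨(n, m, F0 \ G), by omega, hnm, Finset.sdiff_disjoint, ?_⟩
    have hsplit : ∑ γ ∈ F0 ∪ G, Rep zd γ • e γ
        = (∑ γ ∈ F0 \ G, Rep zd γ • e γ) + ∑ γ ∈ G, Rep zd γ • e γ := by
      rw [← Finset.sum_union Finset.sdiff_disjoint]
      congr 1
      rw [Finset.sdiff_union_self_eq_union]
    have h5 := hF0 (F0 ∪ G) Finset.subset_union_left
    rw [dist_eq_norm] at h5
    have h6 : ‖zd - ∑ γ ∈ F0 \ G, Rep zd γ • e γ‖
        ≤ ‖∑ γ ∈ F0 ∪ G, Rep zd γ • e γ - zd‖ + ‖∑ γ ∈ G, Rep zd γ • e γ‖ := by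
      have : zd - ∑ γ ∈ F0 \ G, Rep zd γ • e γ
          = -(∑ γ ∈ F0 ∪ G, Rep zd γ • e γ - zd) + ∑ γ ∈ G, Rep zd γ • e γ := by
        rw [hsplit]; abel
      rw [this]
      exact (norm_add_le _ _).trans (by rw [norm_neg])
    have h7 : (δ/2) * (Se + 1) = ε/4 := by
      rw [hδ]
      field_simp
      ring
    have := hSG.trans_eq h7
    show ‖zd - ∑ γ ∈ F0 \ G, Rep zd γ • e γ‖ ≤ ε
    linarith
  -- build the chain
  set Step : Finset Γ → ℕ → ℕ × ℕ × Finset Γ := fun G N₀ => (key G N₀).choose with hStep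
  have hStepSpec : ∀ (G : Finset Γ) (N₀ : ℕ),
      N₀ ≤ (Step G N₀).1 ∧ (Step G N₀).1 < (Step G N₀).2.1 ∧
      Disjoint (Step G N₀).2.2 G ∧
      ‖((2:ℝ)⁻¹ • (v (Step G N₀).1 - v (Step G N₀).2.1)) -
        ∑ γ ∈ (Step G N₀).2.2, Rep ((2:ℝ)⁻¹ • (v (Step G N₀).1 - v (Step G N₀).2.1)) γ • e γ‖ ≤ ε :=
    fun G N₀ => (key G N₀).choose_spec
  set st : ℕ → (ℕ × ℕ × Finset Γ) × Finset Γ :=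
    fun k => Nat.rec (motive := fun _ => (ℕ × ℕ × Finset Γ) × Finset Γ)
      (let t := Step ∅ 0; (t, t.2.2))
      (fun _ p => let t := Step p.2 (p.1.2.1 + 1); (t, p.2 ∪ t.2.2)) k with hst
  have hst0 : st 0 = (let t := Step ∅ 0; (t, t.2.2)) := rfl
  have hstS : ∀ k, st (k+1) =
      (let t := Step (st k).2 ((st k).1.2.1 + 1); (t, (st k).2 ∪ t.2.2)) := fun k => rfl
  set nn : ℕ → ℕ := fun k => (st k).1.1 with hnn
  set mm : ℕ → ℕ := fun k => (st k).1.2.1 with hmm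
  set B : ℕ → Finset Γ := fun k => (st k).1.2.2 with hB
  set G : ℕ → Finset Γ := fun k => (st k).2 with hG
  -- properties
  have hP : ∀ k, nn k < mm k ∧ Disjoint (B k) (if k = 0 then ∅ else G (k-1)) ∧
      (if k = 0 then True else G (k-1) ≤ G k ∧ mm (k-1) < nn k) ∧ B k ⊆ G k ∧
      ‖((2:ℝ)⁻¹ • (v (nn k) - v (mm k))) -
        ∑ γ ∈ B k, Rep ((2:ℝ)⁻¹ • (v (nn k) - v (mm k))) γ • e γ‖ ≤ ε := by
    intro k
    cases k with
    | zero =>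
      have h := hStepSpec ∅ 0
      refine ⟨h.2.1, by simpa using h.2.2.1, trivial, ?_, h.2.2.2⟩
      simp [hG, hB, hst0]
    | succ k =>
      have h := hStepSpec (G k) (mm k + 1)
      have e1 : nn (k+1) = (Step (G k) (mm k + 1)).1 := rfl
      have e2 : mm (k+1) = (Step (G k) (mm k + 1)).2.1 := rfl
      have e3 : B (k+1) = (Step (G k) (mm k + 1)).2.2 := rfl
      have e4 : G (k+1) = G k ∪ (Step (G k) (mm k + 1)).2.2 := rfl
      refine ⟨by rw [e1, e2]; exact h.2.1, ?_, ?_, ?_, ?_⟩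
      · simp only [Nat.succ_ne_zero, if_false, Nat.succ_sub_one]
        rw [e3]; exact h.2.2.1
      · simp only [Nat.succ_ne_zero, if_false, Nat.succ_sub_one]
        constructor
        · rw [e4]; exact Finset.subset_union_left
        · have h1 := h.1
          rw [e1]
          omega
      · rw [e3, e4]; exact Finset.subset_union_right
      · rw [e1, e2, e3]; exact h.2.2.2
  have hGmono : ∀ j k, j ≤ k → G j ⊆ G k := by
    intro j k hjk
    induction k with
    | zero => have : j = 0 := by omega
              subst this; exact subset_rfl
    | succ k ih =>
      rcases Nat.lt_or_ge j (k+1) with h | h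
      · have h1 := ih (by omega)
        have h2 := (hP (k+1)).2.2.1
        simp only [Nat.succ_ne_zero, if_false, Nat.succ_sub_one] at h2
        exact h1.trans h2.1
      · have : j = k+1 := by omega
        subst this; exact subset_rfl
  refine ⟨nn, mm, B, fun k => (hP k).1, ?_, ?_, fun k => (hP k).2.2.2.2⟩
  · intro k
    have h := (hP (k+1)).2.2.1
    simp only [Nat.succ_ne_zero, if_false, Nat.succ_sub_one] at h
    exact h.2
  · -- pairwise disjoint
    have hdisj : ∀ j k, j < k → Disjoint (B j) (B k) := by
      intro j k hjk
      have h1 : B j ⊆ G j := (hP j).2.2.2.1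
      have h2 : G j ⊆ G (k-1) := hGmono j (k-1) (by omega)
      have h3 := (hP k).2.1
      have hk0 : k ≠ 0 := by omega
      rw [if_neg hk0] at h3
      exact (h3.mono_right (h1.trans h2)).symm
    intro j k hjk
    rcases Nat.lt_or_ge j k with h | h
    · exact hdisj j k h
    · have : k < j := by omega
      exact (hdisj k j this).symm

set_option maxHeartbeats 1000000 in
theorem construct {Γ : Type u} [CompleteSpace X] (e : Γ → X) (Rep : X →ₗ[ℝ] (Γ → ℝ))
    (K : ℝ) (hK1 : 1 ≤ K)
    (hrep : ∀ x, HasSum (fun γ => Rep x γ • e γ) x)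
    (huniq : ∀ (x : X) (a : Γ → ℝ), HasSum (fun γ => a γ • e γ) x → a = Rep x)
    (hKb : ∀ (F : Finset Γ) (x : X), ‖∑ γ ∈ F, Rep x γ • e γ‖ ≤ K * ‖x‖)
    (N : Submodule ℝ X) (hNc : IsClosed (N : Set X))
    (v : ℕ → X) (c C : ℝ) (hc : 0 < c) (hvN : ∀ n, v n ∈ N)
    (hlow : ∀ (s : Finset ℕ) (a : ℕ → ℝ), c * ∑ k ∈ s, |a k| ≤ ‖∑ k ∈ s, a k • v k‖)
    (hupp : ∀ n, ‖v n‖ ≤ C) :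
    ∃ N' : Submodule ℝ X, N' ≤ N ∧ IsClosed (N' : Set X) ∧ ¬FiniteDimensional ℝ N' ∧
      N'.ClosedComplemented := by
  classical
  -- e γ ≠ 0
  have he : ∀ γ, e γ ≠ 0 := by
    intro γ0 h0
    have h : HasSum (fun γ => (fun γ => if γ = γ0 then (1:ℝ) else 0) γ • e γ) 0 := by
      have : (fun γ => (if γ = γ0 then (1:ℝ) else 0) • e γ) = fun _ => (0:X) := by
        funext γ; by_cases h : γ = γ0 <;> simp [h, h0]
      rw [this]; exact hasSum_zero
    have h2 := huniq 0 _ h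
    have h3 : (0 : Γ → ℝ) = Rep 0 := (map_zero Rep).symm
    rw [← h3] at h2
    have := congrFun h2 γ0
    simp at this
  -- Kronecker
  have hRepe : ∀ δ : Γ, Rep (e δ) = fun γ => if γ = δ then (1:ℝ) else 0 := by
    intro δ
    refine (huniq (e δ) _ ?_).symm
    have : (fun γ => (if γ = δ then (1:ℝ) else 0) • e γ) = fun γ => if γ = δ then e δ else 0 := by
      funext γ; by_cases h : γ = δ <;> simp [h]
    rw [this]
    exact hasSum_ite_eq δ (e δ)
  have hRepFin : ∀ (F : Finset Γ) (x : X) (γ : Γ),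
      Rep (∑ γ' ∈ F, Rep x γ' • e γ') γ = if γ ∈ F then Rep x γ else 0 := by
    intro F x γ
    have h1 : Rep (∑ γ' ∈ F, Rep x γ' • e γ') = ∑ γ' ∈ F, Rep x γ' • Rep (e γ') := by
      rw [map_sum]
      exact Finset.sum_congr rfl (fun γ' _ => by rw [map_smul])
    rw [h1]
    have h2 : (∑ γ' ∈ F, Rep x γ' • Rep (e γ')) γ = ∑ γ' ∈ F, Rep x γ' * (if γ = γ' then 1 else 0) := by
      rw [Finset.sum_apply]
      exact Finset.sum_congr rfl (fun γ' _ => by rw [hRepe]; simp)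
    rw [h2]
    simp only [mul_ite, mul_one, mul_zero]
    exact Finset.sum_ite_eq F γ (fun γ' => Rep x γ')
  have hKpos : (0:ℝ) < K := lt_of_lt_of_le one_pos hK1
  set ε : ℝ := c / (16 * K) with hεdef
  have hε : 0 < ε := by positivity
  have hεc : ε ≤ c / 16 := by
    rw [hεdef]
    apply div_le_div_of_nonneg_left (le_of_lt hc) (by norm_num)
    nlinarith
  obtain ⟨nn, mm, B, hnm, hmn, hBdisj, herr⟩ :=
    selection e Rep K hK1 hrep hKb he v C hupp ε hε
  set z : ℕ → X := fun k => (2:ℝ)⁻¹ • (v (nn k) - v (mm k)) with hzdef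
  set y : ℕ → X := fun k => ∑ γ ∈ B k, Rep (z k) γ • e γ with hydef
  have herr' : ∀ k, ‖z k - y k‖ ≤ ε := herr
  have hzN : ∀ k, z k ∈ N := fun k => N.smul_mem _ (N.sub_mem (hvN _) (hvN _))
  have hC0 : (0:ℝ) ≤ C := le_trans (norm_nonneg _) (hupp 0)
  have hzC : ∀ k, ‖z k‖ ≤ C := by
    intro k
    rw [hzdef]
    simp only
    rw [norm_smul]
    have h1 : ‖v (nn k) - v (mm k)‖ ≤ 2*C :=
      (norm_sub_le _ _).trans (by linarith [hupp (nn k), hupp (mm k)])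
    have h2 : ‖(2:ℝ)⁻¹‖ = (2:ℝ)⁻¹ := by norm_num
    rw [h2]
    linarith [mul_le_mul_of_nonneg_left h1 (by norm_num : (0:ℝ) ≤ (2:ℝ)⁻¹)]
  have hyC : ∀ k, ‖y k‖ ≤ C + ε := by
    intro k
    have : y k = z k - (z k - y k) := by abel
    rw [this]
    exact (norm_sub_le _ _).trans (by linarith [hzC k, herr' k])
  -- strict monotone interleaving
  set σ : ℕ → ℕ := fun i => if Even i then nn (i/2) else mm (i/2) with hσdef
  have hσmono : StrictMono σ := by
    apply strictMono_nat_of_lt_succ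
    intro i
    rcases Nat.even_or_odd i with h | h
    · obtain ⟨t, ht⟩ := h
      have hev : Even i := ⟨t, ht⟩
      have hodd : ¬ Even (i+1) := by simp [Nat.even_add_one, hev]
      have e1 : i/2 = t := by omega
      have e2 : (i+1)/2 = t := by omega
      rw [hσdef]
      simp only
      rw [if_pos hev, if_neg hodd, e1, e2]
      exact hnm t
    · obtain ⟨t, ht⟩ := h
      have hodd : ¬ Even i := by
        rw [ht]; intro hcon; obtain ⟨r, hr⟩ := hcon; omega
      have hev : Even (i+1) := by
        rw [Nat.even_add_one]; exact hodd
      have e1 : i/2 = t := by omega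
      have e2 : (i+1)/2 = t+1 := by omega
      rw [hσdef]
      simp only
      rw [if_neg hodd, if_pos hev, e1, e2]
      exact hmn t
  have hinjσ : Function.Injective σ := hσmono.injective
  -- lower l1 bound for z
  have hzlow : ∀ (s : Finset ℕ) (a : ℕ → ℝ), c * ∑ k ∈ s, |a k| ≤ ‖∑ k ∈ s, a k • z k‖ := by
    intro s a
    set g : ℕ → ℝ := fun i => if Even i then a (i/2) / 2 else -(a (i/2) / 2) with hg
    set T1 : Finset ℕ := s.image (fun k => 2*k) with hT1
    set T2 : Finset ℕ := s.image (fun k => 2*k+1) with hT2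
    have hdisjT : Disjoint T1 T2 := by
      rw [Finset.disjoint_left]
      intro i h1 h2
      obtain ⟨k1, _, e1⟩ := Finset.mem_image.1 h1
      obtain ⟨k2, _, e2⟩ := Finset.mem_image.1 h2
      omega
    set T : Finset ℕ := T1 ∪ T2 with hT
    have hinj1 : ∀ a ∈ s, ∀ b ∈ s, 2*a = 2*b → a = b := fun a _ b _ h => by omega
    have hinj2 : ∀ a ∈ s, ∀ b ∈ s, 2*a+1 = 2*b+1 → a = b := fun a _ b _ h => by omega
    have heven2 : ∀ k : ℕ, Even (2*k) := fun k => ⟨k, by ring⟩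
    have hodd2 : ∀ k : ℕ, ¬ Even (2*k+1) := by
      intro k hcon; obtain ⟨r, hr⟩ := hcon; omega
    have hd1 : ∀ k : ℕ, (2*k)/2 = k := fun k => by omega
    have hd2 : ∀ k : ℕ, (2*k+1)/2 = k := fun k => by omega
    have hgsum : ∀ w : ℕ → X, ∑ i ∈ T, g i • w i
        = ∑ k ∈ s, ((a k / 2) • w (2*k) + (-(a k / 2)) • w (2*k+1)) := by
      intro w
      rw [hT, Finset.sum_union hdisjT, hT1, hT2, Finset.sum_image hinj1,
        Finset.sum_image hinj2, ← Finset.sum_add_distrib]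
      refine Finset.sum_congr rfl (fun k hk => ?_)
      rw [hg]
      simp only
      rw [if_pos (heven2 k), if_neg (hodd2 k), hd1, hd2]
    have hsum1 : ∑ i ∈ T, g i • v (σ i) = ∑ k ∈ s, a k • z k := by
      rw [hgsum]
      refine Finset.sum_congr rfl (fun k hk => ?_)
      have s1 : σ (2*k) = nn k := by
        rw [hσdef]; simp only; rw [if_pos (heven2 k), hd1]
      have s2 : σ (2*k+1) = mm k := by
        rw [hσdef]; simp only; rw [if_neg (hodd2 k), hd2]
      rw [s1, s2, hzdef]
      simp only
      module
    have habs : ∑ i ∈ T, |g i| = ∑ k ∈ s, |a k| := by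
      rw [hT, Finset.sum_union hdisjT, hT1, hT2, Finset.sum_image hinj1,
        Finset.sum_image hinj2, ← Finset.sum_add_distrib]
      refine Finset.sum_congr rfl (fun k hk => ?_)
      rw [hg]
      simp only
      rw [if_pos (heven2 k), if_neg (hodd2 k), hd1, hd2, abs_neg]
      rw [abs_div, abs_two]
      ring
    have key := hlow (T.image σ) (fun j => g (Function.invFun σ j))
    rw [Finset.sum_image (fun a _ b _ h => hinjσ h),
      Finset.sum_image (fun a _ b _ h => hinjσ h)] at key
    have hsimp : ∀ i : ℕ, g (Function.invFun σ (σ i)) = g i :=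
      fun i => by rw [Function.leftInverse_invFun hinjσ i]
    simp only [hsimp] at key
    rw [hsum1, habs] at key
    exact key
  -- y lower bound
  set c' : ℝ := c - ε with hc'def
  have hc' : 0 < c' := by
    rw [hc'def]
    nlinarith
  have hc'ge : 15 * c / 16 ≤ c' := by
    rw [hc'def]; linarith
  have hylow : ∀ (s : Finset ℕ) (a : ℕ → ℝ),
      c' * ∑ k ∈ s, |a k| ≤ ‖∑ k ∈ s, a k • y k‖ := by
    intro s a
    have h1 : ∑ k ∈ s, a k • y k = (∑ k ∈ s, a k • z k) - ∑ k ∈ s, a k • (z k - y k) := by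
      rw [← Finset.sum_sub_distrib]
      refine Finset.sum_congr rfl (fun k _ => ?_)
      rw [← smul_sub]
      congr 1
      abel
    have h2 : ‖∑ k ∈ s, a k • (z k - y k)‖ ≤ ε * ∑ k ∈ s, |a k| := by
      calc ‖∑ k ∈ s, a k • (z k - y k)‖ ≤ ∑ k ∈ s, ‖a k • (z k - y k)‖ := norm_sum_le _ _
        _ ≤ ∑ k ∈ s, |a k| * ε := by
            refine Finset.sum_le_sum (fun k _ => ?_)
            rw [norm_smul, Real.norm_eq_abs]
            exact mul_le_mul_of_nonneg_left (herr' k) (abs_nonneg _)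
        _ = ε * ∑ k ∈ s, |a k| := by rw [← Finset.sum_mul]; ring
    have h3 : ‖∑ k ∈ s, a k • z k‖ ≤ ‖∑ k ∈ s, a k • y k‖ + ‖∑ k ∈ s, a k • (z k - y k)‖ := by
      have : ∑ k ∈ s, a k • z k = (∑ k ∈ s, a k • y k) + ∑ k ∈ s, a k • (z k - y k) := by
        rw [h1]; abel
      rw [this]
      exact norm_add_le _ _
    have h4 := hzlow s a
    rw [hc'def, sub_mul]
    linarith
  -- linear independence of y and z
  have hzli : LinearIndependent ℝ z := by
    rw [linearIndependent_iff']
    intro s g hsum i hi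
    have h1 := hzlow s g
    rw [hsum, norm_zero] at h1
    have h2 : ∑ k ∈ s, |g k| ≤ 0 := by nlinarith [Finset.sum_nonneg (fun k (_ : k ∈ s) => abs_nonneg (g k))]
    have h3 : ∑ k ∈ s, |g k| = 0 :=
      le_antisymm h2 (Finset.sum_nonneg (fun k _ => abs_nonneg _))
    have h4 := (Finset.sum_eq_zero_iff_of_nonneg (fun k _ => abs_nonneg (g k))).1 h3 i hi
    exact abs_eq_zero.1 h4
  have hyli : LinearIndependent ℝ y := by
    rw [linearIndependent_iff']
    intro s g hsum i hi
    have h1 := hylow s g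
    rw [hsum, norm_zero] at h1
    have h2 : ∑ k ∈ s, |g k| ≤ 0 := by nlinarith [Finset.sum_nonneg (fun k (_ : k ∈ s) => abs_nonneg (g k))]
    have h3 : ∑ k ∈ s, |g k| = 0 :=
      le_antisymm h2 (Finset.sum_nonneg (fun k _ => abs_nonneg _))
    have h4 := (Finset.sum_eq_zero_iff_of_nonneg (fun k _ => abs_nonneg (g k))).1 h3 i hi
    exact abs_eq_zero.1 h4
  -- the functional
  set W : Submodule ℝ X := Submodule.span ℝ (Set.range y) with hWdef
  set b : Module.Basis ℕ ℝ W := Module.Basis.span hyli with hbdef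
  set φ : W →ₗ[ℝ] ℝ := b.constr ℝ (fun _ => (1:ℝ)) with hφdef
  have hφb : ∀ w : W, ‖φ w‖ ≤ (1/c') * ‖w‖ := by
    intro w
    have hrepr := b.linearCombination_repr w
    have hwx : (w : X) = ∑ k ∈ (b.repr w).support, (b.repr w) k • y k := by
      conv_lhs => rw [← hrepr]
      rw [Finsupp.linearCombination_apply, Finsupp.sum]
      have hcoesum : ((∑ k ∈ (b.repr w).support, (b.repr w) k • b k : W) : X)
          = ∑ k ∈ (b.repr w).support, (b.repr w) k • ((b k : W) : X) :=
        map_sum W.subtype _ _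
      rw [hcoesum]
      refine Finset.sum_congr rfl (fun k _ => ?_)
      rw [hbdef, Module.Basis.span_apply]
    have hφw : φ w = ∑ k ∈ (b.repr w).support, (b.repr w) k := by
      rw [hφdef, Module.Basis.constr_apply, Finsupp.sum]
      simp
    rw [hφw, Real.norm_eq_abs]
    have h2 : |∑ k ∈ (b.repr w).support, (b.repr w) k| ≤ ∑ k ∈ (b.repr w).support, |(b.repr w) k| :=
      Finset.abs_sum_le_sum_abs _ _
    have h3 := hylow ((b.repr w).support) (fun k => (b.repr w) k)
    rw [← hwx] at h3
    have h4 : ‖w‖ = ‖(w : X)‖ := Submodule.coe_norm w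
    rw [h4]
    rw [div_mul_eq_mul_div, one_mul, le_div_iff₀ hc']
    calc |∑ k ∈ (b.repr w).support, (b.repr w) k| * c'
        ≤ (∑ k ∈ (b.repr w).support, |(b.repr w) k|) * c' := by
          exact mul_le_mul_of_nonneg_right h2 (le_of_lt hc')
      _ = c' * ∑ k ∈ (b.repr w).support, |(b.repr w) k| := by ring
      _ ≤ ‖(w : X)‖ := h3
  set φc : W →L[ℝ] ℝ := LinearMap.mkContinuous φ (1/c') hφb with hφcdef
  obtain ⟨Fc, hFext, hFnorm⟩ := exists_extension_norm_eq W φc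
  have hFnle : ‖Fc‖ ≤ 1/c' := by
    rw [hFnorm, hφcdef]
    exact LinearMap.mkContinuous_norm_le _ (by positivity) _
  have hyW : ∀ k, y k ∈ W := fun k => Submodule.subset_span ⟨k, rfl⟩
  have hFy : ∀ k, Fc (y k) = 1 := by
    intro k
    have h1 : Fc (y k) = φc ⟨y k, hyW k⟩ := hFext ⟨y k, hyW k⟩
    have h2 : (⟨y k, hyW k⟩ : W) = b k := by
      refine Subtype.ext ?_
      rw [hbdef, Module.Basis.span_apply]
    rw [h1, h2]
    show φ (b k) = 1
    rw [hφdef]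
    exact Module.Basis.constr_basis b ℝ (fun _ => (1:ℝ)) k
  -- the block coordinate functionals
  set SL : Finset Γ → (X →ₗ[ℝ] X) := fun Fs =>
    { toFun := fun x => ∑ γ ∈ Fs, Rep x γ • e γ
      map_add' := by
        intro a b'
        rw [← Finset.sum_add_distrib]
        exact Finset.sum_congr rfl (fun γ _ => by rw [map_add]; simp [add_smul]
        )
      map_smul' := by
        intro r a
        rw [Finset.smul_sum]
        exact Finset.sum_congr rfl (fun γ _ => by rw [map_smul]; simp [smul_smul]
        ) } with hSLdef
  set Sc : Finset Γ → (X →L[ℝ] X) := fun Fs =>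
    LinearMap.mkContinuous (SL Fs) K (fun x => hKb Fs x) with hScdef
  have hScapp : ∀ (Fs : Finset Γ) (x : X), Sc Fs x = ∑ γ ∈ Fs, Rep x γ • e γ :=
    fun Fs x => rfl
  set cf : ℕ → (X →L[ℝ] ℝ) := fun k => Fc.comp (Sc (B k)) with hcfdef
  have hcfapp : ∀ (k : ℕ) (x : X), cf k x = Fc (∑ γ ∈ B k, Rep x γ • e γ) :=
    fun k x => rfl
  have hScy : ∀ k j, Sc (B k) (y j) = if k = j then y j else 0 := by
    intro k j
    rw [hScapp]
    by_cases hkj : k = j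
    · subst hkj
      rw [if_pos rfl, hydef]
      simp only
      refine Finset.sum_congr rfl (fun γ hγ => ?_)
      rw [hRepFin (B k) (z k) γ, if_pos hγ]
    · rw [if_neg hkj]
      refine Finset.sum_eq_zero (fun γ hγ => ?_)
      have hγj : γ ∉ B j := Finset.disjoint_left.1 (hBdisj k j hkj) hγ
      have h1 : Rep (y j) γ = 0 := by
        rw [hydef]
        simp only
        rw [hRepFin (B j) (z j) γ, if_neg hγj]
      rw [h1, zero_smul]
  have hcfy : ∀ k j, cf k (y j) = if k = j then 1 else 0 := by
    intro k j
    have h1 : cf k (y j) = Fc (Sc (B k) (y j)) := rfl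
    rw [h1, hScy]
    by_cases hkj : k = j
    · rw [if_pos hkj, if_pos hkj, hFy]
    · rw [if_neg hkj, if_neg hkj, map_zero]
  -- partial sums of |cf k x| are bounded
  have hD : ∀ (x : X) (s : Finset ℕ), ∑ k ∈ s, |cf k x| ≤ 2*K*‖Fc‖*‖x‖ := by
    intro x s
    have hpart : ∀ t : Finset ℕ, t ⊆ s → |∑ k ∈ t, cf k x| ≤ K*‖Fc‖*‖x‖ := by
      intro t _
      have h1 : ∑ k ∈ t, cf k x = Fc (∑ k ∈ t, Sc (B k) x) := by
        rw [map_sum]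
        exact Finset.sum_congr rfl (fun k _ => rfl)
      have h2 : ∑ k ∈ t, Sc (B k) x = ∑ γ ∈ t.biUnion B, Rep x γ • e γ := by
        rw [Finset.sum_biUnion (fun j _ k _ hjk => hBdisj j k hjk)]
        exact Finset.sum_congr rfl (fun k _ => (hScapp (B k) x))
      rw [h1, h2]
      have h3 : |Fc (∑ γ ∈ t.biUnion B, Rep x γ • e γ)| ≤ ‖Fc‖ * ‖∑ γ ∈ t.biUnion B, Rep x γ • e γ‖ := by
        have := Fc.le_opNorm (∑ γ ∈ t.biUnion B, Rep x γ • e γ)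
        rwa [Real.norm_eq_abs] at this
      refine h3.trans ?_
      have h4 := hKb (t.biUnion B) x
      calc ‖Fc‖ * ‖∑ γ ∈ t.biUnion B, Rep x γ • e γ‖ ≤ ‖Fc‖ * (K * ‖x‖) :=
            mul_le_mul_of_nonneg_left h4 (norm_nonneg _)
        _ = K*‖Fc‖*‖x‖ := by ring
    set t1 : Finset ℕ := s.filter (fun k => 0 ≤ cf k x) with ht1
    set t2 : Finset ℕ := s.filter (fun k => ¬ (0 ≤ cf k x)) with ht2
    have hsplit : ∑ k ∈ t1, |cf k x| + ∑ k ∈ t2, |cf k x| = ∑ k ∈ s, |cf k x| :=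
      Finset.sum_filter_add_sum_filter_not s _ _
    have e1 : ∑ k ∈ t1, |cf k x| = ∑ k ∈ t1, cf k x := by
      refine Finset.sum_congr rfl (fun k hk => ?_)
      exact abs_of_nonneg (Finset.mem_filter.1 hk).2
    have e2 : ∑ k ∈ t2, |cf k x| = -∑ k ∈ t2, cf k x := by
      rw [← Finset.sum_neg_distrib]
      refine Finset.sum_congr rfl (fun k hk => ?_)
      have := (Finset.mem_filter.1 hk).2
      rw [abs_of_neg (lt_of_not_ge this)]
    have b1 : ∑ k ∈ t1, cf k x ≤ K*‖Fc‖*‖x‖ :=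
      (le_abs_self _).trans (hpart t1 (Finset.filter_subset _ _))
    have b2 : -∑ k ∈ t2, cf k x ≤ K*‖Fc‖*‖x‖ :=
      (neg_le_abs _).trans (hpart t2 (Finset.filter_subset _ _))
    calc ∑ k ∈ s, |cf k x| = ∑ k ∈ t1, |cf k x| + ∑ k ∈ t2, |cf k x| := hsplit.symm
      _ = (∑ k ∈ t1, cf k x) + (-∑ k ∈ t2, cf k x) := by rw [e1, e2]
      _ ≤ K*‖Fc‖*‖x‖ + K*‖Fc‖*‖x‖ := add_le_add b1 b2
      _ = 2*K*‖Fc‖*‖x‖ := by ring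
  have hsummable : ∀ x : X, Summable (fun k => |cf k x|) := by
    intro x
    exact summable_of_sum_range_le (fun k => abs_nonneg _)
      (fun n => hD x (Finset.range n))
  -- building the series operators
  have mkdef : ∀ (w : ℕ → X) (Cw : ℝ), 0 ≤ Cw → (∀ k, ‖w k‖ ≤ Cw) →
      ∃ L : X →L[ℝ] X, (∀ x, Summable (fun k => cf k x • w k)) ∧
        (∀ x, L x = ∑' k, cf k x • w k) ∧ ‖L‖ ≤ 2*K*‖Fc‖*Cw := by
    intro w Cw h0 hw
    have hsn : ∀ x : X, Summable (fun k => ‖cf k x • w k‖) := by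
      intro x
      refine Summable.of_nonneg_of_le (fun k => norm_nonneg _) (fun k => ?_)
        ((hsummable x).mul_right Cw)
      rw [norm_smul, Real.norm_eq_abs]
      exact mul_le_mul_of_nonneg_left (hw k) (abs_nonneg _)
    have hsm : ∀ x : X, Summable (fun k => cf k x • w k) := fun x => (hsn x).of_norm
    have hbound : ∀ x : X, ‖∑' k, cf k x • w k‖ ≤ (2*K*‖Fc‖*Cw) * ‖x‖ := by
      intro x
      have h1 : ‖∑' k, cf k x • w k‖ ≤ ∑' k, ‖cf k x • w k‖ :=
        norm_tsum_le_tsum_norm (hsn x)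
      have h2 : ∑' k, ‖cf k x • w k‖ ≤ ∑' k, |cf k x| * Cw := by
        refine Summable.tsum_le_tsum (fun k => ?_) (hsn x) ((hsummable x).mul_right Cw)
        rw [norm_smul, Real.norm_eq_abs]
        exact mul_le_mul_of_nonneg_left (hw k) (abs_nonneg _)
      have h3 : ∑' k, |cf k x| * Cw = (∑' k, |cf k x|) * Cw := tsum_mul_right
      have h4 : (∑' k, |cf k x|) ≤ 2*K*‖Fc‖*‖x‖ :=
        Summable.tsum_le_of_sum_range_le (hsummable x) (fun n => hD x (Finset.range n))
      calc ‖∑' k, cf k x • w k‖ ≤ ∑' k, ‖cf k x • w k‖ := h1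
        _ ≤ (∑' k, |cf k x|) * Cw := by rw [← h3]; exact h2
        _ ≤ (2*K*‖Fc‖*‖x‖) * Cw := mul_le_mul_of_nonneg_right h4 h0
        _ = (2*K*‖Fc‖*Cw) * ‖x‖ := by ring
    set L0 : X →ₗ[ℝ] X :=
      { toFun := fun x => ∑' k, cf k x • w k
        map_add' := by
          intro p q
          rw [← Summable.tsum_add (hsm p) (hsm q)]
          refine tsum_congr (fun k => ?_)
          rw [map_add, add_smul]
        map_smul' := by
          intro r p
          simp only [RingHom.id_apply]
          rw [← Summable.tsum_const_smul r (hsm p)]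
          refine tsum_congr (fun k => ?_)
          rw [map_smul, smul_smul]
          simp } with hL0def
    have hb0 : 0 ≤ 2*K*‖Fc‖*Cw := by positivity
    exact ⟨LinearMap.mkContinuous L0 (2*K*‖Fc‖*Cw) hbound,
      hsm, fun x => rfl, LinearMap.mkContinuous_norm_le _ hb0 _⟩
  have hCε : (0:ℝ) ≤ C + ε := by linarith
  obtain ⟨Q, hQsm, hQapp, hQn⟩ := mkdef y (C + ε) hCε hyC
  obtain ⟨Tc, hTsm, hTapp, hTn⟩ := mkdef (fun k => z k - y k) ε (le_of_lt hε)
    (fun k => herr' k)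
  -- norm of Tc is < 1
  have hTlt : ‖Tc‖ < 1 := by
    have h1 : 2*K*‖Fc‖*ε ≤ 2*K*(1/c')*ε := by
      have := mul_le_mul_of_nonneg_right
        (mul_le_mul_of_nonneg_left hFnle (by positivity : (0:ℝ) ≤ 2*K)) (le_of_lt hε)
      linarith
    have h2 : 2*K*(1/c')*ε = c/(8*c') := by
      rw [hεdef]
      field_simp
      ring
    have h3 : c/(8*c') < 1 := by
      rw [div_lt_one (by positivity)]
      nlinarith
    have := hTn.trans (h1.trans_eq h2)
    linarith
  -- the invertible perturbation
  have hnegT : ‖-Tc‖ < 1 := by rwa [norm_neg]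
  set u : (X →L[ℝ] X)ˣ := Units.oneSub (-Tc) hnegT with hudef
  have huval : (u : X →L[ℝ] X) = 1 + Tc := by
    show (1:X →L[ℝ] X) - (-Tc) = 1 + Tc
    rw [sub_neg_eq_add]
  have huapp : ∀ x : X, (u : X →L[ℝ] X) x = x + Tc x := by
    intro x
    rw [huval]
    rfl
  have hTy : ∀ j, Tc (y j) = z j - y j := by
    intro j
    rw [hTapp]
    have h1 : ∀ k, k ≠ j → cf k (y j) • (z k - y k) = 0 := by
      intro k hk
      rw [hcfy, if_neg hk, zero_smul]
    rw [tsum_eq_single j h1, hcfy, if_pos rfl, one_smul]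
  have hQy : ∀ j, Q (y j) = y j := by
    intro j
    rw [hQapp]
    have h1 : ∀ k, k ≠ j → cf k (y j) • y k = 0 := by
      intro k hk
      rw [hcfy, if_neg hk, zero_smul]
    rw [tsum_eq_single j h1, hcfy, if_pos rfl, one_smul]
  have huy : ∀ j, (u : X →L[ℝ] X) (y j) = z j := by
    intro j
    rw [huapp, hTy]
    abel
  have huinv : ∀ j, ((u⁻¹ : (X →L[ℝ] X)ˣ) : X →L[ℝ] X) (z j) = y j := by
    intro j
    have h1 : ((u⁻¹ : (X →L[ℝ] X)ˣ) : X →L[ℝ] X) ((u : X →L[ℝ] X) (y j)) = y j := by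
      rw [← ContinuousLinearMap.mul_apply, u.inv_mul]
      rfl
    rwa [huy] at h1
  set Rc : X →L[ℝ] X :=
    ((u : X →L[ℝ] X).comp Q).comp ((u⁻¹ : (X →L[ℝ] X)ˣ) : X →L[ℝ] X) with hRcdef
  have hRcapp : ∀ x, Rc x = (u : X →L[ℝ] X) (Q (((u⁻¹ : (X →L[ℝ] X)ˣ) : X →L[ℝ] X) x)) :=
    fun x => rfl
  have hRz : ∀ j, Rc (z j) = z j := by
    intro j
    rw [hRcapp, huinv, hQy, huy]
  -- the subspace
  set N' : Submodule ℝ X := (Submodule.span ℝ (Set.range z)).topologicalClosure with hN'def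
  have hzmem : ∀ k, z k ∈ N' := fun k =>
    (Submodule.span ℝ (Set.range z)).le_topologicalClosure
      (Submodule.subset_span ⟨k, rfl⟩)
  have hN'closed : IsClosed (N' : Set X) :=
    Submodule.isClosed_topologicalClosure _
  have hN'le : N' ≤ N := by
    refine Submodule.topologicalClosure_minimal _ ?_ hNc
    rw [Submodule.span_le]
    rintro _ ⟨k, rfl⟩
    exact hzN k
  have hRcmem : ∀ x, Rc x ∈ N' := by
    intro x
    set w : X := ((u⁻¹ : (X →L[ℝ] X)ˣ) : X →L[ℝ] X) x with hwdef
    have hs1 : HasSum (fun k => cf k w • y k) (Q w) := by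
      rw [hQapp]
      exact (hQsm w).hasSum
    have hs2 : HasSum (fun k => cf k w • z k) (Rc x) := by
      have h1 := hs1.mapL (u : X →L[ℝ] X)
      have h2 : (fun k => (u : X →L[ℝ] X) (cf k w • y k)) = fun k => cf k w • z k := by
        funext k
        rw [map_smul, huy]
      rw [h2] at h1
      exact h1
    refine hN'closed.mem_of_tendsto hs2.tendsto_sum_nat ?_
    filter_upwards with n
    exact Submodule.sum_mem _ (fun k _ => N'.smul_mem _ (hzmem k))
  have hfix : ∀ x ∈ N', Rc x = x := by
    have hEc : IsClosed ((LinearMap.eqLocus (Rc : X →ₗ[ℝ] X) (ContinuousLinearMap.id ℝ X : X →ₗ[ℝ] X) : Submodule ℝ X) : Set X) := by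
      have h1 : ((LinearMap.eqLocus (Rc : X →ₗ[ℝ] X) (ContinuousLinearMap.id ℝ X : X →ₗ[ℝ] X) : Submodule ℝ X) : Set X)
          = {x | Rc x = (ContinuousLinearMap.id ℝ X) x} := by
        ext x
        exact LinearMap.mem_eqLocus
      rw [h1]
      exact isClosed_eq Rc.continuous (ContinuousLinearMap.id ℝ X).continuous
    have hspanE : Submodule.span ℝ (Set.range z) ≤
        LinearMap.eqLocus (Rc : X →ₗ[ℝ] X) (ContinuousLinearMap.id ℝ X : X →ₗ[ℝ] X) := by
      rw [Submodule.span_le]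
      rintro _ ⟨k, rfl⟩
      show Rc (z k) = (ContinuousLinearMap.id ℝ X) (z k)
      rw [hRz]
      rfl
    have hle := Submodule.topologicalClosure_minimal _ hspanE hEc
    intro x hx
    exact LinearMap.mem_eqLocus.1 (hle hx)
  -- assemble
  refine ⟨N', hN'le, hN'closed, ?_, ?_⟩
  · -- not finite dimensional
    intro hFD
    haveI := hFD
    haveI : IsNoetherian ℝ N' := IsNoetherian.iff_fg.2 inferInstance
    set ζ : ℕ → N' := fun k => ⟨z k, hzmem k⟩ with hζdef
    have hζli : LinearIndependent ℝ ζ := by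
      refine LinearIndependent.of_comp N'.subtype ?_
      have : (N'.subtype ∘ ζ) = z := funext (fun k => rfl)
      rw [this]
      exact hzli
    have : Finite ℕ := hζli.finite_of_isNoetherian
    haveI := this
    exact not_finite ℕ
  · exact ⟨Rc.codRestrict N' hRcmem, fun x => Subtype.ext (hfix x x.2)⟩

end AuxiliaryForStatement6

theorem statement6 (X : Type u) [NormedAddCommGroup X] [NormedSpace ℝ X] [CompleteSpace X]
    (h1 : Hereditarily SeqL1 X) (h2 : HasUnconditionalBasis X) : Subprojective X := by
  obtain ⟨Γ, e, hb⟩ := h2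
  obtain ⟨Rep, K, hK1, hrep, huniq, hKb⟩ := exists_rep e hb
  intro M hMc hMfd
  obtain ⟨N, hNM, hNc, ⟨T⟩⟩ := h1 M hMc hMfd
  obtain ⟨v, c, C, hc, hC, hvN, hbounds⟩ := exists_l1_seq T
  have hupp : ∀ n, ‖v n‖ ≤ C := by
    intro n
    have h1 := (hbounds {n} (fun _ => (1:ℝ))).2
    simpa using h1
  obtain ⟨N', hN'N, hN'c, hN'fd, hN'comp⟩ :=
    construct e Rep K hK1 hrep huniq hKb N hNc v c C hc hvN
      (fun s a => (hbounds s a).1) hupp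
  exact ⟨N', hN'N.trans hNM, hN'c, hN'fd, hN'comp⟩
end
end

section
/- If a Banach space X belongs to the class Sp(U⁻¹∘K) and Q : X → Z is a surjective bounded operator onto a Banach space Z, then Z belongs to the class Sp(U⁻¹∘K). -/
open Filter Topology Metric

noncomputable section

universe u

set_option maxHeartbeats 1000000 in
theorem statement15 (X : Type u) [NormedAddCommGroup X] [NormedSpace ℝ X] [CompleteSpace X]
    (Z : Type u) [NormedAddCommGroup Z] [NormedSpace ℝ Z] [CompleteSpace Z]
    (hX : MemSpUK X) (Q : X →L[ℝ] Z) (hQ : Function.Surjective Q) :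
    MemSpUK Z := by
  intro Y _ _ _ T hT
  -- `T ∘ Q` is unconditionally converging
  have hTQ : UnconditionallyConverging (T.comp Q) := by
    rintro ⟨M, hMclosed, ⟨e⟩, c, hc, hiso⟩
    have hMcomplete : CompleteSpace M := hMclosed.completeSpace_coe
    set f : M →L[ℝ] Z := Q.comp M.subtypeL with hf
    have hT1 : (0:ℝ) < ‖T‖ + 1 := by positivity
    have hbelow : ∀ m : M, ‖m‖ ≤ ((‖T‖ + 1) / c) * ‖f m‖ := by
      intro m
      have h1 : c * ‖(m : X)‖ ≤ ‖T (Q (m : X))‖ := hiso (m : X) m.2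
      have h2 : ‖T (Q (m : X))‖ ≤ (‖T‖ + 1) * ‖Q (m : X)‖ := by
        refine le_trans (T.le_opNorm _) ?_
        have := norm_nonneg (Q (m : X))
        nlinarith
      have hfm : ‖f m‖ = ‖Q (m : X)‖ := rfl
      rw [hfm]
      rw [div_mul_eq_mul_div, le_div_iff₀ hc]
      have : ‖(m : X)‖ = ‖m‖ := rfl
      nlinarith [norm_nonneg m]
    have hanti : AntilipschitzWith (((‖T‖ + 1) / c).toNNReal) f := by
      apply f.antilipschitz_of_bound
      intro m
      refine le_trans (hbelow m) ?_
      gcongr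
      exact Real.le_coe_toNNReal _
    have hrange : (↑(M.map (Q : X →ₗ[ℝ] Z)) : Set Z) = Set.range f := by
      ext z
      simp only [SetLike.mem_coe, Submodule.mem_map, Set.mem_range]
      constructor
      · rintro ⟨x, hx, rfl⟩; exact ⟨⟨x, hx⟩, rfl⟩
      · rintro ⟨m, rfl⟩; exact ⟨(m : X), m.2, rfl⟩
    have hNclosed : IsClosed (↑(M.map (Q : X →ₗ[ℝ] Z)) : Set Z) := by
      rw [hrange]; exact hanti.isClosed_range f.uniformContinuous
    refine hT ⟨M.map (Q : X →ₗ[ℝ] Z), hNclosed, ?_, ?_⟩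
    · -- `M.map Q ≃L[ℝ] SeqC0`
      have : CompleteSpace (M.map (Q : X →ₗ[ℝ] Z)) := hNclosed.completeSpace_coe
      have hmem : ∀ m : M, f m ∈ M.map (Q : X →ₗ[ℝ] Z) := fun m => ⟨(m : X), m.2, rfl⟩
      set g : M →L[ℝ] (M.map (Q : X →ₗ[ℝ] Z)) := f.codRestrict (M.map (Q : X →ₗ[ℝ] Z)) hmem with hg
      have hinjg : Function.Injective g := by
        intro a b hab
        apply hanti.injective (α := M) (β := Z)
        exact congrArg Subtype.val hab
      have hker : LinearMap.ker (g : M →ₗ[ℝ] M.map (Q : X →ₗ[ℝ] Z)) = ⊥ := LinearMap.ker_eq_bot.mpr hinjg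
      have hrg : LinearMap.range (g : M →ₗ[ℝ] M.map (Q : X →ₗ[ℝ] Z)) = ⊤ := by
        rw [LinearMap.range_eq_top]
        rintro ⟨z, hz⟩
        obtain ⟨x, hx, rfl⟩ := hz
        exact ⟨⟨x, hx⟩, rfl⟩
      exact ⟨(ContinuousLinearEquiv.ofBijective g hker hrg).symm.trans e⟩
    · -- `T` is an isomorphism on `M.map (Q : X →ₗ[ℝ] Z)`
      have hQ1 : (0:ℝ) < ‖Q‖ + 1 := by positivity
      refine ⟨c / (‖Q‖ + 1), by positivity, ?_⟩
      rintro z hz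
      obtain ⟨x, hx, rfl⟩ := hz
      have h1 : c * ‖x‖ ≤ ‖T (Q x)‖ := hiso x hx
      have h2 : ‖Q x‖ ≤ (‖Q‖ + 1) * ‖x‖ := by
        refine le_trans (Q.le_opNorm _) ?_
        have := norm_nonneg x
        nlinarith
      rw [div_mul_eq_mul_div, div_le_iff₀ hQ1]
      calc c * ‖Q x‖ ≤ c * ((‖Q‖ + 1) * ‖x‖) := by nlinarith
        _ = c * ‖x‖ * (‖Q‖ + 1) := by ring
        _ ≤ ‖T (Q x)‖ * (‖Q‖ + 1) := by nlinarith
  -- hence `T ∘ Q` is compact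
  have hK : CompactOp (T.comp Q) := hX Y (T.comp Q) hTQ
  -- deduce compactness of `T`
  obtain ⟨C, hC, hpre⟩ := Q.exists_preimage_norm_le hQ
  have hsub : T '' Metric.closedBall 0 1 ⊆
      (fun y : Y => C • y) '' closure ((T.comp Q) '' Metric.closedBall 0 1) := by
    rintro _ ⟨z, hz, rfl⟩
    obtain ⟨x, rfl, hxn⟩ := hpre z
    have hz1 : ‖Q x‖ ≤ 1 := mem_closedBall_zero_iff.mp hz
    refine ⟨(T.comp Q) (C⁻¹ • x), subset_closure ⟨C⁻¹ • x, ?_, rfl⟩, ?_⟩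
    · rw [Metric.mem_closedBall, dist_zero_right, norm_smul, norm_inv, Real.norm_of_nonneg hC.le]
      rw [inv_mul_le_iff₀ hC, mul_one]
      nlinarith
    · show C • (T (Q (C⁻¹ • x))) = T (Q x)
      rw [map_smul, map_smul, smul_smul, mul_inv_cancel₀ hC.ne', one_smul]
  have hcomp : IsCompact ((fun y : Y => C • y) '' closure ((T.comp Q) '' Metric.closedBall 0 1)) :=
    hK.image (continuous_const_smul C)
  exact hcomp.of_isClosed_subset isClosed_closure (closure_minimal hsub hcomp.isClosed)
end
end
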